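/- arXiv:2403.02761 — 6 statements merged into one kernel-verified Lean document; each statement's English description precedes it below -/
import Mathlib

section
/- Let p, q : [0, ∞) → ℂ be measurable and integrable on every finite interval [0, a], and let λ, α ∈ ℂ. Then there exists a unique continuous function φ = (φ₁, φ₂) : [0, ∞) → ℂ² satisfying the integral equation φ(x) = (sin α, −cos α) + ∫₀ˣ A(s, λ) φ(s) ds for all x ≥ 0; this φ is absolutely continuous on every finite interval and satisfies B φ′ + Ω φ = λ φ almost everywhere with φ(0) = (sin α, −cos α). Moreover, for every fixed x ≥ 0, each component φ₁(x, λ, α) and φ₂(x, λ, α) is an entire (analytic) function of the pair (λ, α) ∈ ℂ². -/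
open MeasureTheory Filter Set

noncomputable section

/-- The matrix `B` with rows `(0, 1)` and `(-1, 0)`. -/
def BmatC : Matrix (Fin 2) (Fin 2) ℂ := !![0, 1; -1, 0]

/-- The potential matrix `Ω(x)` with rows `(p x, q x)` and `(q x, -p x)`. -/
def OmegaC (p q : ℝ → ℂ) (x : ℝ) : Matrix (Fin 2) (Fin 2) ℂ := !![p x, q x; q x, -p x]

/-- The matrix `A(x, λ)` with rows `(q x, -p x - λ)` and `(λ - p x, -q x)`,
so that the canonical Dirac system `B y' + Ω y = λ y` reads `y' = A(x, λ) y`. -/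
def AmatC (p q : ℝ → ℂ) (lam : ℂ) (x : ℝ) : Matrix (Fin 2) (Fin 2) ℂ :=
  !![q x, -p x - lam; lam - p x, -q x]

/-! The solution is the Neumann series `∑ φₙ` of the Volterra equation: `φ₀ = c`,
`φₙ₊₁ x = ∫₀ˣ A φₙ`. With `G x = ∫₀ˣ ‖A‖`, the identity `∫₀ˣ g Gⁿ = Gⁿ⁺¹ / (n + 1)` (the
fundamental theorem of calculus for the absolutely continuous `G`) gives
`‖φₙ x‖ ≤ ‖c‖ Gⁿ / n!`; so the series converges uniformly on compacts, the same estimate applied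
to the difference of two solutions gives uniqueness, and Lebesgue differentiation gives the
equation almost everywhere. For `A = A₀ + λ A₁` each `φₙ x` is a polynomial in `λ` and the bound
is uniform for `‖λ‖ < R`, so the sum is entire in `λ`. Joint analyticity in `(λ, α)` follows by
writing `φ = Y c(α)`, where the fundamental solution `Y = 1 + ∫₀ˣ A Y` solves the same kind of
equation in `E →L[ℂ] E`. -/

theorem integral_mul_primitive_pow {g : ℝ → ℝ} {a b : ℝ} (hg : IntervalIntegrable g volume a b)
    (n : ℕ) :
    ∫ s in a..b, g s * (∫ t in a..s, g t) ^ n = (∫ t in a..b, g t) ^ (n + 1) / (n + 1) := by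
  set G : ℝ → ℝ := fun x => ∫ t in a..x, g t with hG
  have hGac : AbsolutelyContinuousOnInterval G a b :=
    hg.absolutelyContinuousOnInterval_intervalIntegral left_mem_uIcc
  have hGpow : ∀ m : ℕ, AbsolutelyContinuousOnInterval (fun x => G x ^ (m + 1)) a b := by
    intro m
    induction m with
    | zero => simpa using hGac
    | succ m ih => simpa [pow_succ] using ih.fun_mul hGac
  have hderiv : ∀ᵐ x, x ∈ uIoc a b →
      deriv (fun x => G x ^ (n + 1)) x = (n + 1) * (g x * G x ^ n) := by
    filter_upwards [hg.ae_hasDerivAt_integral] with x hx hxab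
    rw [((hx (uIoc_subset_uIcc hxab) a left_mem_uIcc).fun_pow (n + 1)).deriv]
    push_cast
    ring
  have hFTC := (hGpow n).integral_deriv_eq_sub
  rw [intervalIntegral.integral_congr_ae hderiv, intervalIntegral.integral_const_mul] at hFTC
  simp only [hG, intervalIntegral.integral_same, ne_eq, Nat.succ_ne_zero, not_false_eq_true,
    zero_pow, sub_zero] at hFTC
  rw [eq_div_iff (by positivity), mul_comm, hFTC]

theorem MeasureTheory.LocallyIntegrableOn.intervalIntegrable_of_Ici {E : Type*}
    [NormedAddCommGroup E] {f : ℝ → E} {a b : ℝ} (hf : LocallyIntegrableOn f (Ici a))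
    (hab : a ≤ b) :
    IntervalIntegrable f volume a b :=
  (intervalIntegrable_iff_integrableOn_Icc_of_le hab).2
    (hf.integrableOn_compact_subset Icc_subset_Ici_self isCompact_Icc)

theorem locallyIntegrableOn_Ici_of_forall_Icc {E : Type*} [NormedAddCommGroup E]
    {f : ℝ → E} {a : ℝ} (hf : ∀ b, a ≤ b → IntegrableOn f (Icc a b)) :
    LocallyIntegrableOn f (Ici a) := fun x hx =>
  ⟨Icc a (x + 1), Ici_inter_Iic (a := a) ▸ inter_mem_nhdsWithin _ (Iic_mem_nhds (by linarith)),
    hf _ (by linarith [mem_Ici.1 hx])⟩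

theorem continuousOn_Ici_of_forall_Icc {X : Type*} [TopologicalSpace X] {f : ℝ → X} {a : ℝ}
    (hf : ∀ b, a ≤ b → ContinuousOn f (Icc a b)) : ContinuousOn f (Ici a) :=
  continuousOn_of_locally_continuousOn fun x hx =>
    ⟨Iio (x + 1), isOpen_Iio, by simp, (hf (x + 1) (by linarith [mem_Ici.1 hx])).mono
      fun _ hy => ⟨hy.1, hy.2.le⟩⟩

theorem MeasureTheory.LocallyIntegrableOn.continuousOn_primitive_Ici {E : Type*}
    [NormedAddCommGroup E] [NormedSpace ℝ E] {f : ℝ → E} {a : ℝ}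
    (hf : LocallyIntegrableOn f (Ici a)) :
    ContinuousOn (fun x => ∫ t in a..x, f t) (Ici a) :=
  continuousOn_Ici_of_forall_Icc fun b hab => by
    simpa [uIcc_of_le hab] using
      intervalIntegral.continuousOn_primitive_interval' (hf.intervalIntegrable_of_Ici hab)
        left_mem_uIcc

theorem MeasureTheory.LocallyIntegrableOn.clm_apply {𝕜 E F : Type*} [NontriviallyNormedField 𝕜]
    [NormedAddCommGroup E] [NormedSpace 𝕜 E] [NormedAddCommGroup F] [NormedSpace 𝕜 F]
    {A : ℝ → E →L[𝕜] F} {u : ℝ → E} {S : Set ℝ}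
    (hS : IsClosed S) (hA : LocallyIntegrableOn A S) (hu : ContinuousOn u S) :
    LocallyIntegrableOn (fun s => A s (u s)) S := by
  rw [locallyIntegrableOn_iff hS.isLocallyClosed]
  intro K hKS hK
  obtain ⟨C, hC⟩ := hK.exists_bound_of_continuousOn (hu.mono hKS)
  refine Integrable.mono' ((hA.integrableOn_compact_subset hKS hK).norm.mul_const C) ?_ ?_
  · exact (continuous_fst.clm_apply continuous_snd).comp_aestronglyMeasurable₂
      (hA.aestronglyMeasurable.mono_set hKS) ((hu.mono hKS).aestronglyMeasurable hK.measurableSet)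
  · filter_upwards [ae_restrict_mem hK.measurableSet] with s hs
    exact (A s).le_opNorm_of_le (hC s hs)

section Volterra

open scoped Nat

variable {E : Type*} [NormedAddCommGroup E] [NormedSpace ℂ E] {A : ℝ → E →L[ℂ] E}

theorem norm_integral_clm_apply_le {g : ℝ → ℝ} {u : ℝ → E} {x K : ℝ} {n : ℕ} (hx : 0 ≤ x)
    (hg : IntervalIntegrable g volume 0 x)
    (hAu : IntervalIntegrable (fun s => A s (u s)) volume 0 x)
    (hAg : ∀ s ∈ Icc 0 x, ‖A s‖ ≤ g s)
    (hu : ∀ s ∈ Icc 0 x, ‖u s‖ ≤ K * ((∫ t in (0:ℝ)..s, g t) ^ n / n !)) :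
    ‖∫ s in (0:ℝ)..x, A s (u s)‖ ≤ K * ((∫ t in (0:ℝ)..x, g t) ^ (n + 1) / (n + 1)!) := by
  have hG := intervalIntegral.continuousOn_primitive_interval' hg left_mem_uIcc
  calc ‖∫ s in (0:ℝ)..x, A s (u s)‖
      ≤ ∫ s in (0:ℝ)..x, ‖A s (u s)‖ := intervalIntegral.norm_integral_le_integral_norm hx
    _ ≤ ∫ s in (0:ℝ)..x, K / n ! * (g s * (∫ t in (0:ℝ)..s, g t) ^ n) := by
        refine intervalIntegral.integral_mono_on hx hAu.norm
          ((hg.mul_continuousOn (hG.pow n)).const_mul _) fun s hs => ?_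
        calc ‖A s (u s)‖ ≤ ‖A s‖ * ‖u s‖ := (A s).le_opNorm _
          _ ≤ g s * (K * ((∫ t in (0:ℝ)..s, g t) ^ n / n !)) :=
              mul_le_mul (hAg s hs) (hu s hs) (norm_nonneg _) ((norm_nonneg _).trans (hAg s hs))
          _ = _ := by ring
    _ = K * ((∫ t in (0:ℝ)..x, g t) ^ (n + 1) / (n + 1)!) := by
        rw [intervalIntegral.integral_const_mul, integral_mul_primitive_pow hg,
          Nat.factorial_succ]
        push_cast
        field_simp

variable (A) in
def neumannTerm (c : E) : ℕ → ℝ → E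
  | 0 => fun _ => c
  | n + 1 => fun x => ∫ s in (0:ℝ)..x, A s (neumannTerm c n s)

theorem continuousOn_neumannTerm (hA : LocallyIntegrableOn A (Ici 0)) (c : E) (n : ℕ) :
    ContinuousOn (neumannTerm A c n) (Ici 0) := by
  induction n with
  | zero => exact continuousOn_const
  | succ n ih => exact (hA.clm_apply isClosed_Ici ih).continuousOn_primitive_Ici

theorem norm_neumannTerm_le (hA : LocallyIntegrableOn A (Ici 0)) {g : ℝ → ℝ}
    (hg : LocallyIntegrableOn g (Ici 0)) (hAg : ∀ s, 0 ≤ s → ‖A s‖ ≤ g s) (c : E) (n : ℕ)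
    {x : ℝ} (hx : 0 ≤ x) :
    ‖neumannTerm A c n x‖ ≤ ‖c‖ * ((∫ t in (0:ℝ)..x, g t) ^ n / n !) := by
  induction n generalizing x with
  | zero => simp [neumannTerm]
  | succ n ih =>
    exact norm_integral_clm_apply_le hx (hg.intervalIntegrable_of_Ici hx)
      ((hA.clm_apply isClosed_Ici (continuousOn_neumannTerm hA c n)).intervalIntegrable_of_Ici hx)
      (fun s hs => hAg s hs.1) fun s hs => ih hs.1

theorem norm_neumannTerm_le_of_mem_Icc (hA : LocallyIntegrableOn A (Ici 0)) (c : E) (n : ℕ)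
    {x b : ℝ} (hx : x ∈ Icc 0 b) :
    ‖neumannTerm A c n x‖ ≤ ‖c‖ * ((∫ t in (0:ℝ)..b, ‖A t‖) ^ n / n !) := by
  refine (norm_neumannTerm_le hA hA.norm (fun _ _ => le_rfl) c n hx.1).trans ?_
  have hG0 : 0 ≤ ∫ t in (0:ℝ)..x, ‖A t‖ :=
    intervalIntegral.integral_nonneg hx.1 fun _ _ => norm_nonneg _
  have hGb : ∫ t in (0:ℝ)..x, ‖A t‖ ≤ ∫ t in (0:ℝ)..b, ‖A t‖ :=
    intervalIntegral.integral_mono_interval le_rfl hx.1 hx.2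
      (Eventually.of_forall fun _ => norm_nonneg _)
      (hA.norm.intervalIntegrable_of_Ici (hx.1.trans hx.2))
  gcongr

theorem eq_zero_of_forall_eq_integral (hA : LocallyIntegrableOn A (Ici 0)) {u : ℝ → E}
    (hu : ContinuousOn u (Ici 0)) (hueq : ∀ x, 0 ≤ x → u x = ∫ s in (0:ℝ)..x, A s (u s))
    {x : ℝ} (hx : 0 ≤ x) : u x = 0 := by
  obtain ⟨K, hK⟩ := isCompact_Icc.exists_bound_of_continuousOn
    (hu.mono (Icc_subset_Ici_self : Icc 0 x ⊆ Ici 0))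
  have hbound : ∀ n : ℕ, ∀ y ∈ Icc 0 x,
      ‖u y‖ ≤ K * ((∫ t in (0:ℝ)..y, ‖A t‖) ^ n / n !) := by
    intro n
    induction n with
    | zero => simpa using hK
    | succ n ih =>
      intro y hy
      rw [hueq y hy.1]
      exact norm_integral_clm_apply_le hy.1 (hA.norm.intervalIntegrable_of_Ici hy.1)
        ((hA.clm_apply isClosed_Ici hu).intervalIntegrable_of_Ici hy.1) (fun _ _ => le_rfl)
        fun s hs => ih s ⟨hs.1, hs.2.trans hy.2⟩
  have hlim :=
    (Real.summable_pow_div_factorial (∫ t in (0:ℝ)..x, ‖A t‖)).tendsto_atTop_zero.const_mul K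
  rw [mul_zero] at hlim
  exact norm_le_zero_iff.1 (ge_of_tendsto' hlim fun n => hbound n x ⟨hx, le_rfl⟩)

theorem eq_of_eq_add_integral (hA : LocallyIntegrableOn A (Ici 0)) {v u : ℝ → E} {c : E}
    (hv : ContinuousOn v (Ici 0)) (hu : ContinuousOn u (Ici 0))
    (hveq : ∀ x, 0 ≤ x → v x = c + ∫ s in (0:ℝ)..x, A s (v s))
    (hueq : ∀ x, 0 ≤ x → u x = c + ∫ s in (0:ℝ)..x, A s (u s)) {x : ℝ} (hx : 0 ≤ x) :
    u x = v x := by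
  refine sub_eq_zero.1 (eq_zero_of_forall_eq_integral hA (hu.sub hv) (fun y hy => ?_) hx)
  simp only [Pi.sub_apply, map_sub]
  rw [hveq y hy, hueq y hy, add_sub_add_left_eq_sub, ← intervalIntegral.integral_sub
    ((hA.clm_apply isClosed_Ici hu).intervalIntegrable_of_Ici hy)
    ((hA.clm_apply isClosed_Ici hv).intervalIntegrable_of_Ici hy)]

variable (A₀ A₁ : ℝ → E →L[ℂ] E) (c : E) in
def neumannCoeff : ℕ → ℕ → ℝ → E
  | 0, 0 => fun _ => c
  | 0, _ + 1 => fun _ => 0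
  | n + 1, 0 => fun x => ∫ s in (0:ℝ)..x, A₀ s (neumannCoeff n 0 s)
  | n + 1, k + 1 => fun x =>
      ∫ s in (0:ℝ)..x, A₀ s (neumannCoeff n (k + 1) s) + A₁ s (neumannCoeff n k s)

variable (A₀ A₁ : ℝ → E →L[ℂ] E) (c : E) in
theorem neumannCoeff_eq_zero_of_lt {n k : ℕ} (h : n < k) (x : ℝ) :
    neumannCoeff A₀ A₁ c n k x = 0 := by
  induction n generalizing k x with
  | zero => obtain _ | k := k <;> first | omega | rfl
  | succ n ih =>
    obtain _ | k := k
    · omega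
    · simp [neumannCoeff, ih (k := k + 1) (by omega), ih (k := k) (by omega)]

variable {A₀ A₁ : ℝ → E →L[ℂ] E}

theorem continuousOn_neumannCoeff (c : E) (hA₀ : LocallyIntegrableOn A₀ (Ici 0))
    (hA₁ : LocallyIntegrableOn A₁ (Ici 0)) (n k : ℕ) :
    ContinuousOn (neumannCoeff A₀ A₁ c n k) (Ici 0) := by
  induction n generalizing k with
  | zero => obtain _ | k := k <;> exact continuousOn_const
  | succ n ih =>
    obtain _ | k := k
    · exact (hA₀.clm_apply isClosed_Ici (ih 0)).continuousOn_primitive_Ici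
    · exact ((hA₀.clm_apply isClosed_Ici (ih (k + 1))).add
        (hA₁.clm_apply isClosed_Ici (ih k))).continuousOn_primitive_Ici

theorem neumannTerm_pencil (c : E) (hA₀ : LocallyIntegrableOn A₀ (Ici 0))
    (hA₁ : LocallyIntegrableOn A₁ (Ici 0)) (lam : ℂ) (n : ℕ) {x : ℝ} (hx : 0 ≤ x) :
    neumannTerm (fun s => A₀ s + lam • A₁ s) c n x
      = ∑ k ∈ Finset.range (n + 1), lam ^ k • neumannCoeff A₀ A₁ c n k x := by
  induction n generalizing x with
  | zero => simp [neumannTerm, neumannCoeff]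
  | succ n ih =>
    have hint : ∀ (B : ℝ → E →L[ℂ] E), LocallyIntegrableOn B (Ici 0) → ∀ k,
        IntervalIntegrable (fun s => B s (neumannCoeff A₀ A₁ c n k s)) volume 0 x :=
      fun B hB k => (hB.clm_apply isClosed_Ici
        (continuousOn_neumannCoeff c hA₀ hA₁ n k)).intervalIntegrable_of_Ici hx
    have hint₀ : ∀ k, IntervalIntegrable
        (fun s => lam ^ k • A₀ s (neumannCoeff A₀ A₁ c n k s)) volume 0 x :=
      fun k => (hint A₀ hA₀ k).smul _
    have hint₁ : ∀ k, IntervalIntegrable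
        (fun s => lam ^ (k + 1) • A₁ s (neumannCoeff A₀ A₁ c n k s)) volume 0 x :=
      fun k => (hint A₁ hA₁ k).smul _
    set I₀ := fun k => ∫ s in (0:ℝ)..x, A₀ s (neumannCoeff A₀ A₁ c n k s)
    set I₁ := fun k => ∫ s in (0:ℝ)..x, A₁ s (neumannCoeff A₀ A₁ c n k s)
    have hcoeff : ∀ k, neumannCoeff A₀ A₁ c (n + 1) (k + 1) x = I₀ (k + 1) + I₁ k := fun k =>
      intervalIntegral.integral_add (hint A₀ hA₀ _) (hint A₁ hA₁ _)
    have hI₀ : I₀ (n + 1) = 0 := by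
      simp [I₀, neumannCoeff_eq_zero_of_lt A₀ A₁ c (Nat.lt_succ_self n)]
    have hshift : ∑ k ∈ Finset.range (n + 1), lam ^ k • I₀ k
        = ∑ k ∈ Finset.range (n + 1), lam ^ (k + 1) • I₀ (k + 1) + I₀ 0 := by
      have := Finset.sum_range_succ' (fun k => lam ^ k • I₀ k) (n + 1)
      rwa [Finset.sum_range_succ, hI₀, smul_zero, add_zero, pow_zero, one_smul] at this
    calc neumannTerm (fun s => A₀ s + lam • A₁ s) c (n + 1) x
        = ∫ s in (0:ℝ)..x, ∑ k ∈ Finset.range (n + 1),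
            (lam ^ k • A₀ s (neumannCoeff A₀ A₁ c n k s)
              + lam ^ (k + 1) • A₁ s (neumannCoeff A₀ A₁ c n k s)) := by
          refine intervalIntegral.integral_congr fun s hs => ?_
          rw [uIcc_of_le hx] at hs
          simp only [ih hs.1, map_sum, map_smul, add_apply, smul_apply, smul_add, smul_smul,
            ← pow_succ, Finset.sum_add_distrib]
      _ = ∑ k ∈ Finset.range (n + 1), (lam ^ k • I₀ k + lam ^ (k + 1) • I₁ k) := by
          rw [intervalIntegral.integral_finsetSum fun k _ => (hint₀ k).add (hint₁ k)]
          refine Finset.sum_congr rfl fun k _ => ?_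
          rw [intervalIntegral.integral_add (hint₀ k) (hint₁ k), intervalIntegral.integral_smul,
            intervalIntegral.integral_smul]
      _ = ∑ k ∈ Finset.range (n + 2), lam ^ k • neumannCoeff A₀ A₁ c (n + 1) k x := by
          rw [Finset.sum_range_succ' (fun k => lam ^ k • neumannCoeff A₀ A₁ c (n + 1) k x)]
          simp only [hcoeff, smul_add, Finset.sum_add_distrib, pow_zero, one_smul, hshift]
          change _ = _ + I₀ 0
          abel

theorem differentiable_neumannTerm_pencil (c : E) (hA₀ : LocallyIntegrableOn A₀ (Ici 0))
    (hA₁ : LocallyIntegrableOn A₁ (Ici 0)) (n : ℕ) {x : ℝ} (hx : 0 ≤ x) :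
    Differentiable ℂ fun lam : ℂ => neumannTerm (fun s => A₀ s + lam • A₁ s) c n x := by
  simp_rw [neumannTerm_pencil c hA₀ hA₁ _ n hx]
  fun_prop

variable [CompleteSpace E]

variable (A) in
def neumannSum (c : E) (x : ℝ) : E := ∑' n, neumannTerm A c n x

theorem hasSum_neumannTerm (hA : LocallyIntegrableOn A (Ici 0)) (c : E) {x : ℝ} (hx : 0 ≤ x) :
    HasSum (fun n => neumannTerm A c n x) (neumannSum A c x) :=
  (Summable.of_norm_bounded ((Real.summable_pow_div_factorial _).mul_left _)
    fun n => norm_neumannTerm_le_of_mem_Icc hA c n ⟨hx, le_rfl⟩).hasSum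

theorem tendstoUniformlyOn_neumannSum (hA : LocallyIntegrableOn A (Ici 0)) (c : E) (b : ℝ) :
    TendstoUniformlyOn (fun N x => ∑ n ∈ Finset.range N, neumannTerm A c n x) (neumannSum A c)
      atTop (Icc 0 b) :=
  tendstoUniformlyOn_tsum_nat ((Real.summable_pow_div_factorial _).mul_left _)
    fun n _ hx => norm_neumannTerm_le_of_mem_Icc hA c n hx

theorem continuousOn_neumannSum (hA : LocallyIntegrableOn A (Ici 0)) (c : E) :
    ContinuousOn (neumannSum A c) (Ici 0) :=
  continuousOn_Ici_of_forall_Icc fun b _ => (tendstoUniformlyOn_neumannSum hA c b).continuousOn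
    (Frequently.of_forall fun _ => continuousOn_finsetSum _
      fun n _ => (continuousOn_neumannTerm hA c n).mono Icc_subset_Ici_self)

theorem neumannSum_eq_add_integral (hA : LocallyIntegrableOn A (Ici 0)) (c : E) {x : ℝ}
    (hx : 0 ≤ x) :
    neumannSum A c x = c + ∫ s in (0:ℝ)..x, A s (neumannSum A c s) := by
  have hIoc : ∀ {t}, t ∈ uIoc 0 x → t ∈ Icc 0 x := fun ht => by
    rw [uIoc_of_le hx] at ht; exact Ioc_subset_Icc_self ht
  have hint : HasSum (fun n => ∫ s in (0:ℝ)..x, A s (neumannTerm A c n s))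
      (∫ s in (0:ℝ)..x, A s (neumannSum A c s)) := by
    refine intervalIntegral.hasSum_integral_of_dominated_convergence
      (fun n t => ‖A t‖ * (‖c‖ * ((∫ t in (0:ℝ)..x, ‖A t‖) ^ n / n !)))
      (fun n => ((hA.clm_apply isClosed_Ici
        (continuousOn_neumannTerm hA c n)).intervalIntegrable_of_Ici hx).def'.aestronglyMeasurable)
      (fun n => Eventually.of_forall fun t ht =>
        (A t).le_opNorm_of_le (norm_neumannTerm_le_of_mem_Icc hA c n (hIoc ht)))
      (Eventually.of_forall fun t _ =>
        ((Real.summable_pow_div_factorial _).mul_left _).mul_left _) ?_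
      (Eventually.of_forall fun t ht => (hasSum_neumannTerm hA c (hIoc ht).1).mapL (A t))
    simp_rw [tsum_mul_left]
    exact (hA.norm.intervalIntegrable_of_Ici hx).mul_const _
  have hsum := (hasSum_nat_add_iff (f := fun n => neumannTerm A c n x) 1).1 hint
  rw [Finset.sum_range_one, add_comm] at hsum
  exact (hasSum_neumannTerm hA c hx).unique hsum

theorem ae_hasDerivAt_of_eq_add_integral {f v : ℝ → E} {c : E}
    (hf : LocallyIntegrableOn f (Ici 0)) (hv : ∀ x, 0 ≤ x → v x = c + ∫ t in (0:ℝ)..x, f t) :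
    ∀ᵐ x ∂volume.restrict (Ici 0), HasDerivAt v (f x) x := by
  have hN : ∀ N : ℕ, ∀ᵐ x, x ∈ uIcc 0 (N : ℝ) →
      HasDerivAt (fun y => ∫ t in (0:ℝ)..y, f t) (f x) x := fun N =>
    (hf.intervalIntegrable_of_Ici N.cast_nonneg).ae_hasDerivAt_integral.mono
      fun x hx hxN => hx hxN 0 left_mem_uIcc
  have hne : ∀ᵐ x : ℝ, x ≠ 0 := compl_mem_ae_iff.2 Real.volume_singleton
  rw [ae_restrict_iff' measurableSet_Ici]
  filter_upwards [ae_all_iff.2 hN, hne] with x hx hx0 hxpos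
  have hpos : 0 < x := lt_of_le_of_ne hxpos (Ne.symm hx0)
  obtain ⟨N, hxN⟩ := exists_nat_ge x
  refine ((hx N ?_).const_add c).congr_of_eventuallyEq ?_
  · rw [uIcc_of_le N.cast_nonneg]; exact ⟨hxpos, hxN⟩
  · filter_upwards [Ioi_mem_nhds hpos] with y hy using hv y (le_of_lt hy)

theorem differentiable_neumannSum_pencil (c : E) (hA₀ : LocallyIntegrableOn A₀ (Ici 0))
    (hA₁ : LocallyIntegrableOn A₁ (Ici 0)) {x : ℝ} (hx : 0 ≤ x) :
    Differentiable ℂ fun lam : ℂ => neumannSum (fun s => A₀ s + lam • A₁ s) c x := by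
  intro z
  set R := ‖z‖ + 1
  have hg : LocallyIntegrableOn (fun s => ‖A₀ s‖ + R * ‖A₁ s‖) (Ici 0) :=
    hA₀.norm.add (hA₁.norm.smul R)
  have hunif : TendstoUniformlyOn
      (fun N (lam : ℂ) => ∑ n ∈ Finset.range N, neumannTerm (fun s => A₀ s + lam • A₁ s) c n x)
      (fun lam : ℂ => neumannSum (fun s => A₀ s + lam • A₁ s) c x) atTop (Metric.ball 0 R) := by
    refine tendstoUniformlyOn_tsum_nat ((Real.summable_pow_div_factorial _).mul_left _)
      fun n lam hlam => norm_neumannTerm_le (hA₀.add (hA₁.smul lam)) hg (fun s _ => ?_) c n hx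
    calc ‖A₀ s + lam • A₁ s‖ ≤ ‖A₀ s‖ + ‖lam‖ * ‖A₁ s‖ :=
          (norm_add_le _ _).trans_eq (by rw [norm_smul])
      _ ≤ ‖A₀ s‖ + R * ‖A₁ s‖ := by
          gcongr
          exact (mem_ball_zero_iff.1 hlam).le
  have hdiff : ∀ N, DifferentiableOn ℂ
      (fun lam : ℂ => ∑ n ∈ Finset.range N, neumannTerm (fun s => A₀ s + lam • A₁ s) c n x)
      (Metric.ball 0 R) := fun N =>
    (Differentiable.fun_sum fun n _ =>
      differentiable_neumannTerm_pencil c hA₀ hA₁ n hx).differentiableOn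
  exact (hunif.tendstoLocallyUniformlyOn.differentiableOn (Eventually.of_forall hdiff)
    Metric.isOpen_ball).differentiableAt
    (Metric.isOpen_ball.mem_nhds (mem_ball_zero_iff.2 (lt_add_one _)))

end Volterra

section FundamentalSolution

variable {E : Type*} [NormedAddCommGroup E] [NormedSpace ℂ E] {A A₀ A₁ : ℝ → E →L[ℂ] E}

theorem MeasureTheory.LocallyIntegrableOn.compL {S : Set ℝ} (hA : LocallyIntegrableOn A S) :
    LocallyIntegrableOn (fun s => ContinuousLinearMap.compL ℂ E E E (A s)) S :=
  (ContinuousLinearMap.compL ℂ E E E).locallyIntegrableOn_comp hA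

variable [CompleteSpace E]

variable (A) in
def fundSol (x : ℝ) : E →L[ℂ] E :=
  neumannSum (fun s => ContinuousLinearMap.compL ℂ E E E (A s)) 1 x

theorem continuousOn_fundSol (hA : LocallyIntegrableOn A (Ici 0)) :
    ContinuousOn (fundSol A) (Ici 0) :=
  continuousOn_neumannSum hA.compL 1

theorem fundSol_apply_eq_add_integral (hA : LocallyIntegrableOn A (Ici 0)) (c : E) {x : ℝ}
    (hx : 0 ≤ x) :
    fundSol A x c = c + ∫ s in (0:ℝ)..x, A s (fundSol A s c) := by
  have h := congrArg (· c) (neumannSum_eq_add_integral hA.compL 1 hx)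
  rwa [add_apply, ContinuousLinearMap.intervalIntegral_apply
    ((hA.compL.clm_apply isClosed_Ici
      (continuousOn_neumannSum hA.compL 1)).intervalIntegrable_of_Ici hx)] at h

theorem analyticAt_fundSol_pencil_apply (hA₀ : LocallyIntegrableOn A₀ (Ici 0))
    (hA₁ : LocallyIntegrableOn A₁ (Ici 0)) {x : ℝ} (hx : 0 ≤ x) (z : ℂ × E) :
    AnalyticAt ℂ (fun w : ℂ × E => fundSol (fun s => A₀ s + w.1 • A₁ s) x w.2) z := by
  have hY : Differentiable ℂ fun lam : ℂ => fundSol (fun s => A₀ s + lam • A₁ s) x := by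
    simpa only [fundSol, map_add, map_smul] using
      differentiable_neumannSum_pencil 1 hA₀.compL hA₁.compL hx
  exact ((ContinuousLinearMap.id ℂ (E →L[ℂ] E)).analyticAt_bilinear _).comp
    (((hY.analyticAt z.1).comp analyticAt_fst).prod analyticAt_snd)

end FundamentalSolution

section Dirac

def matrixToCLM {ι : Type*} [Fintype ι] [DecidableEq ι] :
    Matrix ι ι ℂ ≃ₗ[ℂ] ((ι → ℂ) →L[ℂ] (ι → ℂ)) :=
  Matrix.toLin'.trans LinearMap.toContinuousLinearMap

@[simp]
theorem matrixToCLM_apply {ι : Type*} [Fintype ι] [DecidableEq ι] (M : Matrix ι ι ℂ)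
    (v : ι → ℂ) : matrixToCLM M v = M.mulVec v := by
  simp [matrixToCLM]

def diracPotential (p q : ℝ → ℂ) (x : ℝ) : (Fin 2 → ℂ) →L[ℂ] (Fin 2 → ℂ) :=
  q x • matrixToCLM !![1, 0; 0, -1] + p x • matrixToCLM !![0, -1; -1, 0]

def diracJ : (Fin 2 → ℂ) →L[ℂ] (Fin 2 → ℂ) := matrixToCLM !![0, -1; 1, 0]

theorem diracPotential_add_smul_apply (p q : ℝ → ℂ) (lam : ℂ) (x : ℝ) (v : Fin 2 → ℂ) :
    (diracPotential p q x + lam • diracJ) v = (AmatC p q lam x).mulVec v := by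
  ext i
  fin_cases i <;>
    simp [diracPotential, diracJ, AmatC, Matrix.mulVec, dotProduct, Fin.sum_univ_two] <;> ring

theorem locallyIntegrableOn_diracPotential {p q : ℝ → ℂ}
    (hp : ∀ a : ℝ, 0 ≤ a → IntegrableOn p (Icc 0 a))
    (hq : ∀ a : ℝ, 0 ≤ a → IntegrableOn q (Icc 0 a)) :
    LocallyIntegrableOn (diracPotential p q) (Ici 0) :=
  locallyIntegrableOn_Ici_of_forall_Icc fun b hb =>
    ((hq b hb).smul_const _).add ((hp b hb).smul_const _)

theorem BmatC_mulVec_AmatC_add_OmegaC_mulVec (p q : ℝ → ℂ) (lam : ℂ) (x : ℝ) (v : Fin 2 → ℂ) :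
    BmatC.mulVec ((AmatC p q lam x).mulVec v) + (OmegaC p q x).mulVec v = lam • v := by
  funext i
  fin_cases i <;>
    simp [BmatC, AmatC, OmegaC, dotProduct, Fin.sum_univ_two] <;> ring

end Dirac

theorem stmt_0_general (p q : ℝ → ℂ)
    (hp : ∀ a : ℝ, 0 ≤ a → IntegrableOn p (Icc 0 a))
    (hq : ∀ a : ℝ, 0 ≤ a → IntegrableOn q (Icc 0 a)) :
    ∃ φ : ℂ → ℂ → ℝ → (Fin 2 → ℂ),
      (∀ lam α : ℂ,
        ContinuousOn (φ lam α) (Ici 0) ∧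
        (∀ x : ℝ, 0 ≤ x →
          φ lam α x = ![Complex.sin α, -Complex.cos α] +
            ∫ s in (0:ℝ)..x, (AmatC p q lam s).mulVec (φ lam α s)) ∧
        (∀ ψ : ℝ → (Fin 2 → ℂ), ContinuousOn ψ (Ici 0) →
          (∀ x : ℝ, 0 ≤ x → ψ x = ![Complex.sin α, -Complex.cos α] +
            ∫ s in (0:ℝ)..x, (AmatC p q lam s).mulVec (ψ s)) →
          ∀ x : ℝ, 0 ≤ x → ψ x = φ lam α x) ∧
        φ lam α 0 = ![Complex.sin α, -Complex.cos α] ∧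
        (∀ᵐ x ∂(volume.restrict (Ici (0:ℝ))),
          ∃ d : Fin 2 → ℂ, HasDerivAt (φ lam α) d x ∧
            BmatC.mulVec d + (OmegaC p q x).mulVec (φ lam α x) = lam • φ lam α x)) ∧
      (∀ x : ℝ, 0 ≤ x → ∀ i : Fin 2, ∀ z : ℂ × ℂ,
        AnalyticAt ℂ (fun w : ℂ × ℂ => φ w.1 w.2 x i) z) := by
  have hA₀ := locallyIntegrableOn_diracPotential hp hq
  have hA₁ : LocallyIntegrableOn (fun _ : ℝ => diracJ) (Ici 0) := locallyIntegrableOn_const _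
  have hA : ∀ lam : ℂ, LocallyIntegrableOn (fun s => diracPotential p q s + lam • diracJ) (Ici 0) :=
    fun lam => hA₀.add (hA₁.smul lam)
  set Y := fun lam : ℂ => fundSol fun s => diracPotential p q s + lam • diracJ
  have hcont : ∀ lam c, ContinuousOn (fun x => Y lam x c) (Ici 0) := fun lam _ =>
    (continuousOn_fundSol (hA lam)).clm_apply continuousOn_const
  have hY : ∀ lam c x, 0 ≤ x →
      Y lam x c = c + ∫ s in (0:ℝ)..x, (diracPotential p q s + lam • diracJ) (Y lam s c) :=
    fun lam c _ hx => fundSol_apply_eq_add_integral (hA lam) c hx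
  refine ⟨fun lam α x => Y lam x ![Complex.sin α, -Complex.cos α], fun lam α =>
    ⟨hcont lam _, fun x hx => ?_, fun ψ hψ hψeq x hx => ?_, by simpa using hY lam _ 0 le_rfl, ?_⟩,
    fun x hx i z => ?_⟩
  · simpa only [diracPotential_add_smul_apply] using hY lam _ x hx
  · simp only [← diracPotential_add_smul_apply] at hψeq
    exact eq_of_eq_add_integral (hA lam) (hcont lam _) hψ (hY lam _) hψeq hx
  · filter_upwards [ae_hasDerivAt_of_eq_add_integral
      ((hA lam).clm_apply isClosed_Ici (hcont lam _)) (hY lam _)] with x hx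
    exact ⟨_, hx, by rw [diracPotential_add_smul_apply, BmatC_mulVec_AmatC_add_OmegaC_mulVec]⟩
  · have hinit : AnalyticAt ℂ (fun α : ℂ => ![Complex.sin α, -Complex.cos α]) z.2 := by
      refine analyticAt_pi_iff.2 fun j => ?_
      fin_cases j
      · exact Complex.analyticAt_sin
      · exact Complex.analyticAt_cos.neg
    exact analyticAt_pi_iff.1 ((analyticAt_fundSol_pencil_apply hA₀ hA₁ hx _).comp
      (analyticAt_fst.prod (hinit.comp analyticAt_snd))) i

/-- For measurable, locally integrable `p, q : [0,∞) → ℂ` and any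
`λ, α ∈ ℂ` the Cauchy problem for the canonical Dirac system has a unique continuous
solution `φ(·, λ, α)` of the integral equation
`φ(x) = (sin α, -cos α) + ∫₀ˣ A(s,λ) φ(s) ds`; this solution satisfies
`B φ' + Ω φ = λ φ` almost everywhere on `[0,∞)` with `φ(0) = (sin α, -cos α)`, and
for each fixed `x ≥ 0` both components are entire functions of `(λ, α) ∈ ℂ²`. -/
theorem stmt_0 (p q : ℝ → ℂ) (hpm : Measurable p) (hqm : Measurable q)
    (hp : ∀ a : ℝ, 0 ≤ a → IntegrableOn p (Icc 0 a))
    (hq : ∀ a : ℝ, 0 ≤ a → IntegrableOn q (Icc 0 a)) :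
    ∃ φ : ℂ → ℂ → ℝ → (Fin 2 → ℂ),
      (∀ lam α : ℂ,
        ContinuousOn (φ lam α) (Ici 0) ∧
        (∀ x : ℝ, 0 ≤ x →
          φ lam α x = ![Complex.sin α, -Complex.cos α] +
            ∫ s in (0:ℝ)..x, (AmatC p q lam s).mulVec (φ lam α s)) ∧
        (∀ ψ : ℝ → (Fin 2 → ℂ), ContinuousOn ψ (Ici 0) →
          (∀ x : ℝ, 0 ≤ x → ψ x = ![Complex.sin α, -Complex.cos α] +
            ∫ s in (0:ℝ)..x, (AmatC p q lam s).mulVec (ψ s)) →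
          ∀ x : ℝ, 0 ≤ x → ψ x = φ lam α x) ∧
        φ lam α 0 = ![Complex.sin α, -Complex.cos α] ∧
        (∀ᵐ x ∂(volume.restrict (Ici (0:ℝ))),
          ∃ d : Fin 2 → ℂ, HasDerivAt (φ lam α) d x ∧
            BmatC.mulVec d + (OmegaC p q x).mulVec (φ lam α x) = lam • φ lam α x)) ∧
      (∀ x : ℝ, 0 ≤ x → ∀ i : Fin 2, ∀ z : ℂ × ℂ,
        AnalyticAt ℂ (fun w : ℂ × ℂ => φ w.1 w.2 x i) z) :=
  stmt_0_general p q hp hq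
end
end

section
/- Let p, q : [0, ∞) → ℂ be locally integrable, let φ(x, λ, α) be the unique solution of the Cauchy problem B y′ + Ω y = λ y, y(0) = (sin α, −cos α), and let φ₀(x, λ, α) = (sin(λx + α), −cos(λx + α)). Suppose K(x, t) is a measurable matrix kernel, defined for |t| ≤ x and integrable in t, such that for all x ≥ 0 and all λ ∈ ℂ the fundamental matrix satisfies Φ(x, λ) = exp(−B λ x) + ∫_{−x}^{x} K(x, t) exp(−B λ t) dt. Then, defining K₀(x, t, α) = K(x, t) − K(x, −t)·(σ₂ cos 2α + σ₃ sin 2α), for every λ, α ∈ ℂ and every x ≥ 0 one has φ(x, λ, α) = φ₀(x, λ, α) + ∫₀ˣ K₀(x, t, α) φ₀(t, λ, α) dt. -/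
open MeasureTheory Filter Set

noncomputable section

/-- The Pauli-type matrix `σ₂` with rows `(1, 0)` and `(0, -1)`. -/
def sigma2C : Matrix (Fin 2) (Fin 2) ℂ := !![1, 0; 0, -1]

/-- The Pauli-type matrix `σ₃` with rows `(0, 1)` and `(1, 0)`. -/
def sigma3C : Matrix (Fin 2) (Fin 2) ℂ := !![0, 1; 1, 0]

/-- The matrix exponential `exp (-B λ t) = cos (λ t) • E - sin (λ t) • B`. -/
def EmatC (lam : ℂ) (t : ℝ) : Matrix (Fin 2) (Fin 2) ℂ :=
  Complex.cos (lam * t) • (1 : Matrix (Fin 2) (Fin 2) ℂ) - Complex.sin (lam * t) • BmatC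

/-- The free solution `φ₀(x, λ, α) = (sin (λx + α), -cos (λx + α))`. -/
def phi0C (lam α : ℂ) (x : ℝ) : Fin 2 → ℂ :=
  ![Complex.sin (lam * x + α), -Complex.cos (lam * x + α)]

/-- The kernel `K₀(x, t, α) = K(x, t) - K(x, -t)·(σ₂ cos 2α + σ₃ sin 2α)`. -/
def K0ker (K : ℝ → ℝ → Matrix (Fin 2) (Fin 2) ℂ) (α : ℂ) (x t : ℝ) :
    Matrix (Fin 2) (Fin 2) ℂ :=
  K x t - K x (-t) * (Complex.cos (2 * α) • sigma2C + Complex.sin (2 * α) • sigma3C)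

/-!
Both `φ(·, λ, α)` and `Φ(·, λ) (sin α, -cos α)` are continuous solutions of the Volterra equation
`y x = (sin α, -cos α) + ∫₀ˣ A(s, λ) y(s) ds`, and such solutions are unique by a Gronwall
argument. Applying the representation of `Φ` to `(sin α, -cos α)` turns `exp(-Bλt)` into `φ₀(t)`;
folding `∫_{-x}^0` onto `[0, x]` by `t ↦ -t`, the identity
`φ₀(-t) = -(σ₂ cos 2α + σ₃ sin 2α) φ₀(t)` then produces the kernel `K₀`.
-/

open Matrix Topology

theorem eventually_nhdsGT_integral_lt {k : ℝ → ℝ} {x b ε : ℝ} (hxb : x < b)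
    (hk : IntervalIntegrable k volume x b) (hε : 0 < ε) :
    ∀ᶠ y in 𝓝[>] x, ∫ s in x..y, k s < ε := by
  have hcont := intervalIntegral.continuousOn_primitive_interval' hk left_mem_uIcc x left_mem_uIcc
  rw [uIcc_of_le hxb.le] at hcont
  rw [← nhdsWithin_Ioc_eq_nhdsGT hxb]
  exact (hcont.mono Ioc_subset_Icc_self).eventually_lt continuousWithinAt_const (by simpa)

theorem monotoneOn_integral_of_nonneg {g : ℝ → ℝ} {a b : ℝ} (hg : IntegrableOn g (Icc a b))
    (hg0 : ∀ x ∈ Icc a b, 0 ≤ g x) : MonotoneOn (fun x => ∫ s in a..x, g s) (Icc a b) := by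
  intro x hx y hy hxy
  have hint {u v : ℝ} (hu : u ∈ Icc a b) (hv : v ∈ Icc a b) : IntervalIntegrable g volume u v :=
    (hg.mono_set (uIcc_subset_Icc hu hv)).intervalIntegrable
  have hxa : a ∈ Icc a b := left_mem_Icc.2 (hx.1.trans hx.2)
  show ∫ s in a..x, g s ≤ ∫ s in a..y, g s
  rw [← intervalIntegral.integral_add_adjacent_intervals (hint hxa hx) (hint hx hy)]
  exact le_add_of_nonneg_right <| intervalIntegral.integral_nonneg hxy fun s hs =>
    hg0 s ⟨hx.1.trans hs.1, hs.2.trans hy.2⟩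

theorem eqOn_zero_of_le_integral_mul {f k : ℝ → ℝ} {a b : ℝ}
    (hf : ContinuousOn f (Icc a b)) (hf0 : ∀ x ∈ Icc a b, 0 ≤ f x)
    (hk : IntegrableOn k (Icc a b)) (hk0 : ∀ x ∈ Icc a b, 0 ≤ k x)
    (hle : ∀ x ∈ Icc a b, f x ≤ ∫ s in a..x, k s * f s) :
    EqOn f 0 (Icc a b) := by
  rcases lt_or_ge b a with hba | hab
  · simp [Icc_eq_empty_of_lt hba]
  set G : ℝ → ℝ := fun x => ∫ s in a..x, k s * f s
  have hkf : IntegrableOn (fun s => k s * f s) (Icc a b) := hk.mul_continuousOn hf isCompact_Icc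
  have hkf_int {x y : ℝ} (hx : x ∈ Icc a b) (hy : y ∈ Icc a b) :
      IntervalIntegrable (fun s => k s * f s) volume x y :=
    (hkf.mono_set (uIcc_subset_Icc hx hy)).intervalIntegrable
  have hk_int {x y : ℝ} (hx : x ∈ Icc a b) (hy : y ∈ Icc a b) : IntervalIntegrable k volume x y :=
    (hk.mono_set (uIcc_subset_Icc hx hy)).intervalIntegrable
  have ha : a ∈ Icc a b := left_mem_Icc.2 hab
  have hG_mono : MonotoneOn G (Icc a b) :=
    monotoneOn_integral_of_nonneg hkf fun x hx => mul_nonneg (hk0 x hx) (hf0 x hx)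
  have hG_nonneg {y : ℝ} (hy : y ∈ Icc a b) : 0 ≤ G y :=
    intervalIntegral.integral_same (f := fun s => k s * f s) ▸ hG_mono ha hy hy.1
  -- `G` vanishes on `[a, b]` by continuous induction: if `G x = 0` and `y > x` is so close to `x`
  -- that `∫ s in x..y, k s < 1 / 2`, then `G y ≤ G y / 2` because `f ≤ G` and `G` is monotone.
  have hG_zero : Icc a b ⊆ G ⁻¹' {0} := by
    have hclosed : IsClosed (G ⁻¹' {0} ∩ Icc a b) := by
      have hGc : ContinuousOn G (Icc a b) := by
        simpa [uIcc_of_le hab] using intervalIntegral.continuousOn_primitive_interval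
          (a := a) (b := b) (by simpa [uIcc_of_le hab] using hkf)
      rw [inter_comm]
      exact hGc.preimage_isClosed_of_isClosed isClosed_Icc isClosed_singleton
    refine hclosed.Icc_subset_of_forall_mem_nhdsWithin intervalIntegral.integral_same ?_
    rintro x ⟨hGx, hxa, hxb⟩
    have hx : x ∈ Icc a b := ⟨hxa, hxb.le⟩
    filter_upwards [eventually_nhdsGT_integral_lt hxb (hk_int hx (right_mem_Icc.2 hab))
      one_half_pos, Ioc_mem_nhdsGT hxb] with y hky hy
    have hy' : y ∈ Icc a b := ⟨hxa.trans hy.1.le, hy.2⟩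
    have hGy : G y ≤ G y / 2 :=
      calc G y = G x + ∫ s in x..y, k s * f s :=
            (intervalIntegral.integral_add_adjacent_intervals (hkf_int ha hx) (hkf_int hx hy')).symm
        _ = ∫ s in x..y, k s * f s := by rw [show G x = 0 from hGx, zero_add]
        _ ≤ ∫ s in x..y, k s * G y := by
            refine intervalIntegral.integral_mono_on hy.1.le (hkf_int hx hy')
              ((hk_int hx hy').mul_const _) fun s hs => ?_
            have hs' : s ∈ Icc a b := ⟨hxa.trans hs.1, hs.2.trans hy.2⟩
            exact mul_le_mul_of_nonneg_left ((hle s hs').trans (hG_mono hs' hy' hs.2)) (hk0 s hs')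
        _ = (∫ s in x..y, k s) * G y := intervalIntegral.integral_mul_const _ _
        _ ≤ 1 / 2 * G y := by gcongr; exact hG_nonneg hy'
        _ = G y / 2 := by ring
    show G y = 0
    linarith [hG_nonneg hy']
  intro x hx
  exact le_antisymm ((hle x hx).trans_eq (hG_zero hx)) (hf0 x hx)

section MatrixIntegral

variable {ι 𝕜 : Type*} [Fintype ι] [RCLike 𝕜]

theorem IntervalIntegrable.of_eval {E : Type*} [NormedAddCommGroup E] {f : ℝ → ι → E} {a b : ℝ}
    (hf : ∀ i, IntervalIntegrable (fun t => f t i) volume a b) :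
    IntervalIntegrable f volume a b :=
  ⟨Integrable.of_eval fun i => (hf i).1, Integrable.of_eval fun i => (hf i).2⟩

theorem eval_intervalIntegral {E : Type*} [NormedAddCommGroup E] [NormedSpace ℝ E]
    [CompleteSpace E] {f : ℝ → ι → E} {a b : ℝ} (hf : IntervalIntegrable f volume a b) (i : ι) :
    (∫ t in a..b, f t) i = ∫ t in a..b, f t i :=
  ((ContinuousLinearMap.proj (R := ℝ) i).intervalIntegral_comp_comm hf).symm

theorem intervalIntegrable_mulVec_apply {A : ℝ → Matrix ι ι 𝕜} {w : ℝ → ι → 𝕜} {a b : ℝ}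
    (hA : ∀ i j, IntervalIntegrable (fun t => A t i j) volume a b)
    (hw : ∀ j, ContinuousOn (fun t => w t j) (uIcc a b)) (i : ι) :
    IntervalIntegrable (fun t => (A t *ᵥ w t) i) volume a b := by
  simp only [mulVec, dotProduct]
  simpa only [Finset.sum_fn] using
    IntervalIntegrable.sum Finset.univ fun j _ => (hA i j).mul_continuousOn (hw j)

theorem intervalIntegrable_mul_apply {A B : ℝ → Matrix ι ι 𝕜} {a b : ℝ}
    (hA : ∀ i j, IntervalIntegrable (fun t => A t i j) volume a b)
    (hB : ∀ i j, ContinuousOn (fun t => B t i j) (uIcc a b)) (i j : ι) :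
    IntervalIntegrable (fun t => (A t * B t) i j) volume a b :=
  intervalIntegrable_mulVec_apply hA (fun k => hB k j) i

theorem IntervalIntegrable.mulVec {A : ℝ → Matrix ι ι 𝕜} {w : ℝ → ι → 𝕜} {a b : ℝ}
    (hA : ∀ i j, IntervalIntegrable (fun t => A t i j) volume a b)
    (hw : ContinuousOn w (uIcc a b)) :
    IntervalIntegrable (fun t => A t *ᵥ w t) volume a b :=
  .of_eval <| intervalIntegrable_mulVec_apply hA fun j => (continuous_apply j).comp_continuousOn hw

theorem mulVec_eq_add_integral_of_forall_apply {M N : Matrix ι ι 𝕜} {F : ℝ → Matrix ι ι 𝕜}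
    {a b : ℝ} (hF : ∀ i j, IntervalIntegrable (fun t => F t i j) volume a b)
    (h : ∀ i j, M i j = N i j + ∫ t in a..b, F t i j) (v : ι → 𝕜) :
    M *ᵥ v = N *ᵥ v + ∫ t in a..b, F t *ᵥ v := by
  ext i
  have hFv : IntervalIntegrable (fun t => F t *ᵥ v) volume a b :=
    IntervalIntegrable.mulVec (w := fun _ => v) hF continuousOn_const
  rw [Pi.add_apply, eval_intervalIntegral hFv i]
  simp only [mulVec, dotProduct, h, add_mul, Finset.sum_add_distrib]
  rw [intervalIntegral.integral_finsetSum fun j _ => (hF i j).mul_const _]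
  simp only [intervalIntegral.integral_mul_const]

theorem norm_mulVec_le_sum_norm_mul (A : Matrix ι ι 𝕜) (w : ι → 𝕜) :
    ‖A *ᵥ w‖ ≤ (∑ i, ∑ j, ‖A i j‖) * ‖w‖ := by
  refine pi_norm_le_iff_of_nonneg (by positivity) |>.2 fun i => ?_
  calc ‖(A *ᵥ w) i‖ ≤ ∑ j, ‖A i j‖ * ‖w j‖ := (norm_sum_le _ _).trans_eq (by simp [norm_mul])
    _ ≤ ∑ j, ‖A i j‖ * ‖w‖ := by gcongr; exact norm_le_pi_norm w _
    _ = (∑ j, ‖A i j‖) * ‖w‖ := Finset.sum_mul .. |>.symm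
    _ ≤ (∑ i, ∑ j, ‖A i j‖) * ‖w‖ := by
        refine mul_le_mul_of_nonneg_right ?_ (norm_nonneg w)
        exact Finset.single_le_sum (f := fun i => ∑ j, ‖A i j‖) (fun _ _ => by positivity)
          (Finset.mem_univ i)

theorem eqOn_of_eq_add_integral_mulVec {A : ℝ → Matrix ι ι 𝕜} {y z : ℝ → ι → 𝕜} {v : ι → 𝕜}
    {a b : ℝ} (hA : ∀ i j, IntegrableOn (fun s => A s i j) (Icc a b))
    (hy : ContinuousOn y (Icc a b)) (hz : ContinuousOn z (Icc a b))
    (hyA : ∀ x ∈ Icc a b, y x = v + ∫ s in a..x, A s *ᵥ y s)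
    (hzA : ∀ x ∈ Icc a b, z x = v + ∫ s in a..x, A s *ᵥ z s) :
    EqOn y z (Icc a b) := by
  set k : ℝ → ℝ := fun s => ∑ i, ∑ j, ‖A s i j‖
  have hk : IntegrableOn k (Icc a b) :=
    integrable_finsetSum _ fun i _ => integrable_finsetSum _ fun j _ => (hA i j).norm
  have hsub {x : ℝ} (hx : x ∈ Icc a b) : uIcc a x ⊆ Icc a b := by
    rw [uIcc_of_le hx.1]; exact Icc_subset_Icc_right hx.2
  have hAyz {x : ℝ} (hx : x ∈ Icc a b) (w : ℝ → ι → 𝕜) (hw : ContinuousOn w (Icc a b)) :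
      IntervalIntegrable (fun s => A s *ᵥ w s) volume a x :=
    IntervalIntegrable.mulVec (fun i j => ((hA i j).mono_set (hsub hx)).intervalIntegrable)
      (hw.mono (hsub hx))
  have hle : ∀ x ∈ Icc a b, ‖y x - z x‖ ≤ ∫ s in a..x, k s * ‖y s - z s‖ := fun x hx =>
    calc ‖y x - z x‖ = ‖∫ s in a..x, A s *ᵥ (y s - z s)‖ := by
          rw [hyA x hx, hzA x hx, add_sub_add_left_eq_sub,
            ← intervalIntegral.integral_sub (hAyz hx y hy) (hAyz hx z hz)]
          simp only [mulVec_sub]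
      _ ≤ ∫ s in a..x, ‖A s *ᵥ (y s - z s)‖ := intervalIntegral.norm_integral_le_integral_norm hx.1
      _ ≤ ∫ s in a..x, k s * ‖y s - z s‖ :=
          intervalIntegral.integral_mono_on hx.1 (hAyz hx _ (hy.sub hz)).norm
            (((hk.mono_set (hsub hx)).intervalIntegrable).mul_continuousOn
              ((hy.sub hz).norm.mono (hsub hx)))
            fun s _ => norm_mulVec_le_sum_norm_mul _ _
  have hzero := eqOn_zero_of_le_integral_mul (hy.sub hz).norm (fun _ _ => norm_nonneg _) hk
    (fun _ _ => by positivity) hle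
  exact fun x hx => sub_eq_zero.1 (norm_eq_zero.1 (hzero hx))

end MatrixIntegral

theorem intervalIntegral.integral_add_comp_neg {E : Type*} [NormedAddCommGroup E]
    [NormedSpace ℝ E] {g : ℝ → E} {x : ℝ} (hg : IntervalIntegrable g volume (-x) x) :
    ∫ t in (0 : ℝ)..x, (g t + g (-t)) = ∫ t in (-x)..x, g t := by
  have h0 : (0 : ℝ) ∈ uIcc (-x) x := by rcases le_total 0 x with h | h <;> simp [h]
  have hpos : IntervalIntegrable g volume 0 x := hg.mono_set (uIcc_subset_uIcc h0 right_mem_uIcc)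
  have hneg : IntervalIntegrable g volume (-x) 0 := hg.mono_set (uIcc_subset_uIcc left_mem_uIcc h0)
  have hneg' : IntervalIntegrable (fun t => g (-t)) volume 0 x := by
    simpa using ((IntervalIntegrable.iff_comp_neg (f := g)).1 hneg).symm
  rw [intervalIntegral.integral_add hpos hneg',
    intervalIntegral.integral_comp_neg, neg_zero, add_comm,
    intervalIntegral.integral_add_adjacent_intervals hneg hpos]

theorem integrableOn_AmatC_apply {p q : ℝ → ℂ} {a b : ℝ} (hp : IntegrableOn p (Icc a b))
    (hq : IntegrableOn q (Icc a b)) (lam : ℂ) (i j : Fin 2) :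
    IntegrableOn (fun s => AmatC p q lam s i j) (Icc a b) := by
  have hc : IntegrableOn (fun _ => lam) (Icc a b) := integrableOn_const measure_Icc_lt_top.ne
  fin_cases i <;> fin_cases j <;> simp [AmatC]
  exacts [hq, hp.neg.sub hc, hc.sub hp, hq]

theorem continuous_EmatC_apply (lam : ℂ) (i j : Fin 2) : Continuous fun t => EmatC lam t i j := by
  simp only [EmatC, Matrix.sub_apply, Matrix.smul_apply, smul_eq_mul]
  fun_prop

theorem continuous_phi0C (lam α : ℂ) : Continuous (phi0C lam α) := by
  refine continuous_pi fun i => ?_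
  fin_cases i <;> simp [phi0C] <;> fun_prop

theorem EmatC_mulVec_sin_cos (lam α : ℂ) (t : ℝ) :
    EmatC lam t *ᵥ ![Complex.sin α, -Complex.cos α] = phi0C lam α t := by
  ext i
  fin_cases i <;> simp [EmatC, BmatC, phi0C, mulVec, dotProduct, Fin.sum_univ_two,
    Complex.sin_add, Complex.cos_add] <;> ring

-- `σ₂ cos 2α + σ₃ sin 2α` is the reflection in the line spanned by `(cos α, sin α)`.
theorem phi0C_neg (lam α : ℂ) (t : ℝ) :
    phi0C lam α (-t) =
      -((Complex.cos (2 * α) • sigma2C + Complex.sin (2 * α) • sigma3C) *ᵥ phi0C lam α t) := by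
  ext i
  fin_cases i <;>
    simp [phi0C, sigma2C, sigma3C, Complex.sin_add, Complex.cos_add, Complex.sin_two_mul,
      Complex.cos_two_mul]
  · linear_combination (2 * Complex.sin (lam * t) * Complex.cos α) * Complex.sin_sq_add_cos_sq α
  · linear_combination (2 * Complex.cos (lam * t) * Complex.cos α) * Complex.sin_sq_add_cos_sq α

theorem stmt_2_general (p q : ℝ → ℂ)
    (hp : ∀ a : ℝ, 0 ≤ a → IntegrableOn p (Icc 0 a))
    (hq : ∀ a : ℝ, 0 ≤ a → IntegrableOn q (Icc 0 a))
    (φ : ℂ → ℂ → ℝ → (Fin 2 → ℂ))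
    (hφc : ∀ lam α : ℂ, ContinuousOn (φ lam α) (Ici 0))
    (hφ : ∀ lam α : ℂ, ∀ x : ℝ, 0 ≤ x →
      φ lam α x = ![Complex.sin α, -Complex.cos α] +
        ∫ s in (0:ℝ)..x, (AmatC p q lam s).mulVec (φ lam α s))
    (Φ : ℂ → ℝ → Matrix (Fin 2) (Fin 2) ℂ)
    (hΦc : ∀ lam : ℂ, ∀ i j : Fin 2, ContinuousOn (fun x => Φ lam x i j) (Ici 0))
    (hΦ : ∀ lam : ℂ, ∀ x : ℝ, 0 ≤ x → ∀ i j : Fin 2,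
      Φ lam x i j = (1 : Matrix (Fin 2) (Fin 2) ℂ) i j +
        ∫ s in (0:ℝ)..x, (AmatC p q lam s * Φ lam s) i j)
    (K : ℝ → ℝ → Matrix (Fin 2) (Fin 2) ℂ)
    (hKint : ∀ x : ℝ, 0 ≤ x → ∀ i j : Fin 2,
      IntervalIntegrable (fun t => K x t i j) volume (-x) x)
    (hKrep : ∀ lam : ℂ, ∀ x : ℝ, 0 ≤ x → ∀ i j : Fin 2,
      Φ lam x i j = EmatC lam x i j + ∫ t in (-x)..x, (K x t * EmatC lam t) i j) :
    ∀ lam α : ℂ, ∀ x : ℝ, 0 ≤ x →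
      φ lam α x = phi0C lam α x +
        ∫ t in (0:ℝ)..x, (K0ker K α x t).mulVec (phi0C lam α t) := by
  intro lam α x hx
  set v : Fin 2 → ℂ := ![Complex.sin α, -Complex.cos α] with hv
  have hA := integrableOn_AmatC_apply (hp x hx) (hq x hx) lam
  have hΦv : ∀ y ∈ Icc 0 x,
      Φ lam y *ᵥ v = v + ∫ s in (0:ℝ)..y, AmatC p q lam s *ᵥ (Φ lam s *ᵥ v) := by
    intro y hy
    have hsub : uIcc 0 y ⊆ Icc 0 x := by rw [uIcc_of_le hy.1]; exact Icc_subset_Icc_right hy.2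
    rw [mulVec_eq_add_integral_of_forall_apply (intervalIntegrable_mul_apply
      (fun i k => ((hA i k).mono_set hsub).intervalIntegrable)
      (fun k j => (hΦc lam k j).mono (hsub.trans Icc_subset_Ici_self))) (hΦ lam y hy.1) v]
    simp only [one_mulVec, mulVec_mulVec]
  have hΦvc : ContinuousOn (fun y => Φ lam y *ᵥ v) (Icc 0 x) := by
    refine continuousOn_pi.2 fun i => ?_
    simp only [mulVec, dotProduct]
    exact continuousOn_finsetSum _ fun j _ =>
      ((hΦc lam i j).mono Icc_subset_Ici_self).mul continuousOn_const
  have hφΦ : φ lam α x = Φ lam x *ᵥ v :=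
    eqOn_of_eq_add_integral_mulVec hA ((hφc lam α).mono Icc_subset_Ici_self) hΦvc
      (fun y hy => hφ lam α y hy.1) hΦv (right_mem_Icc.2 hx)
  have hg : IntervalIntegrable (fun t => K x t *ᵥ phi0C lam α t) volume (-x) x :=
    IntervalIntegrable.mulVec (hKint x hx) (continuous_phi0C lam α).continuousOn
  rw [hφΦ, mulVec_eq_add_integral_of_forall_apply (intervalIntegrable_mul_apply
      (hKint x hx) (fun k j => (continuous_EmatC_apply lam k j).continuousOn)) (hKrep lam x hx) v]
  simp only [← mulVec_mulVec, hv, EmatC_mulVec_sin_cos]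
  rw [← intervalIntegral.integral_add_comp_neg hg]
  congr 1
  refine intervalIntegral.integral_congr fun t _ => ?_
  rw [phi0C_neg, mulVec_neg, mulVec_mulVec, K0ker, sub_mulVec, sub_eq_add_neg]

/-- If `K(x, t)` is a kernel realizing the transformation-operator
representation of the fundamental matrix `Φ(x, λ)`, then the solution `φ(x, λ, α)`
of the Cauchy problem with data `(sin α, -cos α)` is represented as
`φ(x,λ,α) = φ₀(x,λ,α) + ∫₀ˣ K₀(x,t,α) φ₀(t,λ,α) dt`. -/
theorem stmt_2 (p q : ℝ → ℂ)
    (hp : ∀ a : ℝ, 0 ≤ a → IntegrableOn p (Icc 0 a))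
    (hq : ∀ a : ℝ, 0 ≤ a → IntegrableOn q (Icc 0 a))
    (φ : ℂ → ℂ → ℝ → (Fin 2 → ℂ))
    (hφc : ∀ lam α : ℂ, ContinuousOn (φ lam α) (Ici 0))
    (hφ : ∀ lam α : ℂ, ∀ x : ℝ, 0 ≤ x →
      φ lam α x = ![Complex.sin α, -Complex.cos α] +
        ∫ s in (0:ℝ)..x, (AmatC p q lam s).mulVec (φ lam α s))
    (Φ : ℂ → ℝ → Matrix (Fin 2) (Fin 2) ℂ)
    (hΦc : ∀ lam : ℂ, ∀ i j : Fin 2, ContinuousOn (fun x => Φ lam x i j) (Ici 0))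
    (hΦ : ∀ lam : ℂ, ∀ x : ℝ, 0 ≤ x → ∀ i j : Fin 2,
      Φ lam x i j = (1 : Matrix (Fin 2) (Fin 2) ℂ) i j +
        ∫ s in (0:ℝ)..x, (AmatC p q lam s * Φ lam s) i j)
    (K : ℝ → ℝ → Matrix (Fin 2) (Fin 2) ℂ)
    (hKmeas : ∀ i j : Fin 2, Measurable fun z : ℝ × ℝ => K z.1 z.2 i j)
    (hKint : ∀ x : ℝ, 0 ≤ x → ∀ i j : Fin 2,
      IntervalIntegrable (fun t => K x t i j) volume (-x) x)
    (hKrep : ∀ lam : ℂ, ∀ x : ℝ, 0 ≤ x → ∀ i j : Fin 2,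
      Φ lam x i j = EmatC lam x i j + ∫ t in (-x)..x, (K x t * EmatC lam t) i j) :
    ∀ lam α : ℂ, ∀ x : ℝ, 0 ≤ x →
      φ lam α x = phi0C lam α x +
        ∫ t in (0:ℝ)..x, (K0ker K α x t).mulVec (phi0C lam α t) :=
  stmt_2_general p q hp hq φ hφc hφ Φ hΦc hΦ K hKint hKrep
end
end

section
/- For an arbitrary complex-valued function f ∈ L¹(a, b), where −∞ < a < b < ∞ and d = max(|a|, |b|), one has lim_{|λ| → ∞} e^{−|Im λ| d} ∫_a^b f(x) cos(λx) dx = 0 and lim_{|λ| → ∞} e^{−|Im λ| d} ∫_a^b f(x) sin(λx) dx = 0, where the limits are taken as λ ∈ ℂ tends to infinity in modulus. -/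
/-!
On `[a, b]` we have `‖exp (i λ x)‖ = exp (-x Im λ) ≤ exp (|Im λ| d)`, so after the weight
`exp (-|Im λ| d)` the map `f ↦ ∫ f(x) exp (i λ x) dx` has norm at most `1` on `L¹(a, b)`,
uniformly in `λ`. For a smooth `f`, integrating by parts against `exp (i λ x) / (i λ)` bounds the
weighted integral by `C / |λ|`. Since smooth functions are dense in `L¹(a, b)`, the weighted
integrals tend to `0` for every `f`, and `cos` and `sin` are averages of `exp (± i λ x)`.
-/

open MeasureTheory Filter Set
open Complex (I)
open scoped ContDiff

section Density

variable {E F : Type*} [NormedAddCommGroup E] [NormedSpace ℝ E] [FiniteDimensional ℝ E]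
  [MeasurableSpace E] [BorelSpace E] {μ : Measure E} [μ.IsAddHaarMeasure]
  [NormedAddCommGroup F] [NormedSpace ℝ F] [CompleteSpace F]

theorem MeasureTheory.IntegrableOn.exists_contDiff_integral_norm_sub_le {f : E → F} {s : Set E}
    (hs : μ s ≠ ⊤) (hf : IntegrableOn f s μ) {ε : ℝ} (hε : 0 < ε) :
    ∃ u : E → F, ContDiff ℝ ∞ u ∧ ∫ x in s, ‖f x - u x‖ ∂μ ≤ ε := by
  have : IsFiniteMeasure (μ.restrict s) := isFiniteMeasure_restrict.2 hs
  obtain ⟨g, hg_supp, hfg, hg_cont, hg_int⟩ :=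
    hf.exists_hasCompactSupport_integral_sub_le (half_pos hε)
  set δ := ε / (2 * (μ.real s + 1))
  have hδ : 0 < δ := by positivity
  obtain ⟨u, hu, hug⟩ :=
    (hg_supp.uniformContinuous_of_continuous hg_cont).exists_contDiff_dist_le hδ
  have hfg_int : Integrable (fun x ↦ ‖f x - g x‖) (μ.restrict s) := (hf.sub hg_int).norm
  refine ⟨u, hu, ?_⟩
  calc ∫ x in s, ‖f x - u x‖ ∂μ ≤ ∫ x in s, (‖f x - g x‖ + δ) ∂μ := by
        refine integral_mono_of_nonneg (.of_forall fun _ ↦ norm_nonneg _)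
          (hfg_int.add (integrable_const δ)) (.of_forall fun x ↦ ?_)
        calc ‖f x - u x‖ ≤ ‖f x - g x‖ + ‖g x - u x‖ :=
              norm_sub_le_norm_sub_add_norm_sub _ _ _
          _ ≤ ‖f x - g x‖ + δ := by
            gcongr
            rw [norm_sub_rev, ← dist_eq_norm]
            exact (hug x).le
    _ = ∫ x in s, ‖f x - g x‖ ∂μ + δ * μ.real s := by
        rw [integral_add hfg_int (integrable_const δ), integral_const,
          measureReal_restrict_apply_univ, smul_eq_mul, mul_comm]
    _ ≤ ε / 2 + ε / 2 := by
        gcongr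
        rw [div_mul_eq_mul_div, div_le_div_iff₀ (by positivity) two_pos]
        nlinarith [measureReal_nonneg (μ := μ) (s := s)]
    _ = ε := add_halves ε

end Density

section Exponential

variable {a b : ℝ}

theorem norm_cexp_mul_I_le (lam : ℂ) {x : ℝ} (hx : x ∈ Icc a b) :
    ‖Complex.exp (lam * x * I)‖ ≤ Real.exp (|lam.im| * max |a| |b|) := by
  rw [Complex.norm_exp, Real.exp_le_exp]
  calc (lam * x * I).re = -(lam.im * x) := by simp
    _ ≤ |lam.im * x| := neg_le_abs _
    _ = |lam.im| * |x| := abs_mul _ _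
    _ ≤ |lam.im| * max |a| |b| := by gcongr; exact abs_le_max_abs_abs hx.1 hx.2

theorem norm_integral_mul_cexp_mul_I_le (hab : a ≤ b) {g : ℝ → ℂ}
    (hg : IntervalIntegrable g volume a b) (lam : ℂ) :
    ‖∫ x in a..b, g x * Complex.exp (lam * x * I)‖ ≤
      Real.exp (|lam.im| * max |a| |b|) * ∫ x in a..b, ‖g x‖ := by
  rw [← intervalIntegral.integral_const_mul]
  refine intervalIntegral.norm_integral_le_of_norm_le hab (.of_forall fun x hx ↦ ?_)
    (hg.norm.const_mul _)
  rw [norm_mul, mul_comm]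
  exact mul_le_mul_of_nonneg_right (norm_cexp_mul_I_le lam (Ioc_subset_Icc_self hx))
    (norm_nonneg _)

theorem hasDerivAt_cexp_mul_I_div {lam : ℂ} (hlam : lam ≠ 0) (x : ℝ) :
    HasDerivAt (fun x : ℝ ↦ Complex.exp (lam * x * I) / (lam * I))
      (Complex.exp (lam * x * I)) x := by
  have h := ((((hasDerivAt_id x).ofReal_comp).const_mul lam).mul_const I).cexp.div_const (lam * I)
  simpa [mul_div_cancel_right₀ _ (mul_ne_zero hlam Complex.I_ne_zero)] using h

theorem norm_integral_mul_cexp_mul_I_le_div (hab : a ≤ b) {u u' : ℝ → ℂ}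
    (hu : ∀ x ∈ uIcc a b, HasDerivAt u (u' x) x) (hu' : IntervalIntegrable u' volume a b)
    {lam : ℂ} (hlam : lam ≠ 0) :
    ‖∫ x in a..b, u x * Complex.exp (lam * x * I)‖ ≤
      Real.exp (|lam.im| * max |a| |b|) * (‖u a‖ + ‖u b‖ + ∫ x in a..b, ‖u' x‖) / ‖lam‖ := by
  set M := Real.exp (|lam.im| * max |a| |b|)
  have hcont : Continuous fun x : ℝ ↦ Complex.exp (lam * x * I) := by fun_prop
  have hibp := intervalIntegral.integral_mul_deriv_eq_deriv_mul hu
    (fun x _ ↦ hasDerivAt_cexp_mul_I_div hlam x) hu' (hcont.intervalIntegrable a b)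
  have hnorm : ‖lam * I‖ = ‖lam‖ := by simp
  have hend : ∀ x ∈ Icc a b,
      ‖u x * (Complex.exp (lam * x * I) / (lam * I))‖ ≤ ‖u x‖ * M / ‖lam‖ := by
    intro x hx
    rw [norm_mul, norm_div, hnorm, mul_div_assoc]
    gcongr
    exact norm_cexp_mul_I_le lam hx
  have hrem : ‖∫ x in a..b, u' x * (Complex.exp (lam * x * I) / (lam * I))‖ ≤
      M * (∫ x in a..b, ‖u' x‖) / ‖lam‖ := by
    simp only [← mul_div_assoc, intervalIntegral.integral_div, norm_div, hnorm]
    gcongr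
    exact norm_integral_mul_cexp_mul_I_le hab hu' lam
  rw [hibp]
  calc _ ≤ ‖u b * (Complex.exp (lam * b * I) / (lam * I))‖ +
        ‖u a * (Complex.exp (lam * a * I) / (lam * I))‖ +
        ‖∫ x in a..b, u' x * (Complex.exp (lam * x * I) / (lam * I))‖ :=
          norm_sub_le_of_le (norm_sub_le _ _) le_rfl
    _ ≤ ‖u b‖ * M / ‖lam‖ + ‖u a‖ * M / ‖lam‖ + M * (∫ x in a..b, ‖u' x‖) / ‖lam‖ := by
        gcongr
        · exact hend b (right_mem_Icc.2 hab)
        · exact hend a (left_mem_Icc.2 hab)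
    _ = M * (‖u a‖ + ‖u b‖ + ∫ x in a..b, ‖u' x‖) / ‖lam‖ := by ring

theorem tendsto_exp_mul_norm_integral_mul_cexp_mul_I (hab : a ≤ b) {f : ℝ → ℂ}
    (hf : IntegrableOn f (Ioc a b)) :
    Tendsto (fun lam : ℂ ↦ Real.exp (-|lam.im| * max |a| |b|) *
      ‖∫ x in a..b, f x * Complex.exp (lam * x * I)‖) (cocompact ℂ) (nhds 0) := by
  rw [Metric.tendsto_nhds]
  intro ε hε
  obtain ⟨u, hu, hfu⟩ :=
    hf.exists_contDiff_integral_norm_sub_le measure_Ioc_lt_top.ne (half_pos hε)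
  have hu_deriv : ∀ x ∈ uIcc a b, HasDerivAt u (deriv u x) x := fun x _ ↦
    ((hu.differentiable (by simp)).differentiableAt).hasDerivAt
  have hu' : IntervalIntegrable (deriv u) volume a b :=
    (hu.continuous_deriv (by simp)).intervalIntegrable a b
  have hfi : IntervalIntegrable f volume a b :=
    (intervalIntegrable_iff_integrableOn_Ioc_of_le hab).2 hf
  have hfu_int : IntervalIntegrable (fun x ↦ f x - u x) volume a b :=
    hfi.sub (hu.continuous.intervalIntegrable a b)
  set C := ‖u a‖ + ‖u b‖ + ∫ x in a..b, ‖deriv u x‖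
  have hdecay : Tendsto (fun lam : ℂ ↦ C / ‖lam‖) (cocompact ℂ) (nhds 0) :=
    tendsto_const_nhds.div_atTop tendsto_norm_cocompact_atTop
  filter_upwards [hdecay.eventually (gt_mem_nhds (half_pos hε)),
    tendsto_norm_cocompact_atTop.eventually_gt_atTop 0] with lam hsmall hpos
  set M := Real.exp (|lam.im| * max |a| |b|)
  have hweight : Real.exp (-|lam.im| * max |a| |b|) * M = 1 := by
    rw [← Real.exp_add, neg_mul, neg_add_cancel, Real.exp_zero]
  have hsplit : ∫ x in a..b, f x * Complex.exp (lam * x * I) =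
      (∫ x in a..b, (f x - u x) * Complex.exp (lam * x * I)) +
        ∫ x in a..b, u x * Complex.exp (lam * x * I) := by
    have hcexp : ContinuousOn (fun x : ℝ ↦ Complex.exp (lam * x * I)) (uIcc a b) := by fun_prop
    rw [← intervalIntegral.integral_add (hfu_int.mul_continuousOn hcexp)
      ((hu.continuous.intervalIntegrable a b).mul_continuousOn hcexp)]
    simp only [sub_mul, sub_add_cancel]
  rw [Real.dist_0_eq_abs, abs_of_nonneg (by positivity)]
  calc Real.exp (-|lam.im| * max |a| |b|) * ‖∫ x in a..b, f x * Complex.exp (lam * x * I)‖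
      ≤ Real.exp (-|lam.im| * max |a| |b|) *
          (M * (∫ x in a..b, ‖f x - u x‖) + M * C / ‖lam‖) := by
        rw [hsplit]
        gcongr
        exact norm_add_le_of_le (norm_integral_mul_cexp_mul_I_le hab hfu_int lam)
          (norm_integral_mul_cexp_mul_I_le_div hab hu_deriv hu' (norm_pos_iff.1 hpos))
    _ = (∫ x in a..b, ‖f x - u x‖) + C / ‖lam‖ := by
        rw [mul_add, ← mul_assoc, mul_div_assoc, ← mul_assoc, hweight, one_mul, one_mul]
    _ < ε := by
        rw [intervalIntegral.integral_of_le hab]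
        linarith

theorem norm_integral_mul_cos_le {f : ℝ → ℂ} (hf : IntervalIntegrable f volume a b) (lam : ℂ) :
    ‖∫ x in a..b, f x * Complex.cos (lam * x)‖ ≤
      (‖∫ x in a..b, f x * Complex.exp (lam * x * I)‖ +
        ‖∫ x in a..b, f x * Complex.exp (-lam * x * I)‖) / 2 := by
  have hcos : ∫ x in a..b, f x * Complex.cos (lam * x) =
      ((∫ x in a..b, f x * Complex.exp (lam * x * I)) +
        ∫ x in a..b, f x * Complex.exp (-lam * x * I)) / 2 := by
    rw [← intervalIntegral.integral_add (hf.mul_continuousOn (by fun_prop))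
      (hf.mul_continuousOn (by fun_prop)), ← intervalIntegral.integral_div]
    refine intervalIntegral.integral_congr fun x _ ↦ ?_
    simp only [Complex.cos, neg_mul]
    ring
  rw [hcos, norm_div, Complex.norm_two]
  gcongr
  exact norm_add_le _ _

theorem norm_integral_mul_sin_le {f : ℝ → ℂ} (hf : IntervalIntegrable f volume a b) (lam : ℂ) :
    ‖∫ x in a..b, f x * Complex.sin (lam * x)‖ ≤
      (‖∫ x in a..b, f x * Complex.exp (lam * x * I)‖ +
        ‖∫ x in a..b, f x * Complex.exp (-lam * x * I)‖) / 2 := by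
  have hsin : ∫ x in a..b, f x * Complex.sin (lam * x) =
      ((∫ x in a..b, f x * Complex.exp (-lam * x * I)) -
        ∫ x in a..b, f x * Complex.exp (lam * x * I)) * I / 2 := by
    rw [← intervalIntegral.integral_sub (hf.mul_continuousOn (by fun_prop))
      (hf.mul_continuousOn (by fun_prop)), ← intervalIntegral.integral_mul_const,
      ← intervalIntegral.integral_div]
    refine intervalIntegral.integral_congr fun x _ ↦ ?_
    simp only [Complex.sin, neg_mul]
    ring
  rw [hsin, norm_div, norm_mul, Complex.norm_I, mul_one, Complex.norm_two, add_comm]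
  gcongr
  exact norm_sub_le _ _

end Exponential

/-- Riemann–Lebesgue lemma with a complex parameter. For
`f ∈ L¹(a, b)` and `d = max(|a|, |b|)`, both
`e^{-|Im λ| d} ∫_a^b f(x) cos(λx) dx` and `e^{-|Im λ| d} ∫_a^b f(x) sin(λx) dx`
tend to `0` as `|λ| → ∞` in `ℂ`. -/
theorem stmt_5 (a b : ℝ) (hab : a < b) (f : ℝ → ℂ) (hf : IntegrableOn f (Ioc a b)) :
    Tendsto (fun lam : ℂ =>
        Real.exp (-|lam.im| * max |a| |b|) *
          ‖∫ x in a..b, f x * Complex.cos (lam * x)‖)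
      (cocompact ℂ) (nhds 0) ∧
    Tendsto (fun lam : ℂ =>
        Real.exp (-|lam.im| * max |a| |b|) *
          ‖∫ x in a..b, f x * Complex.sin (lam * x)‖)
      (cocompact ℂ) (nhds 0) := by
  have hfi : IntervalIntegrable f volume a b :=
    (intervalIntegrable_iff_integrableOn_Ioc_of_le hab.le).2 hf
  have hpos := tendsto_exp_mul_norm_integral_mul_cexp_mul_I hab.le hf
  have hneg : Tendsto (fun lam : ℂ ↦ Real.exp (-|lam.im| * max |a| |b|) *
      ‖∫ x in a..b, f x * Complex.exp (-lam * x * I)‖) (cocompact ℂ) (nhds 0) := by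
    have h_neg : Tendsto (fun lam : ℂ ↦ -lam) (cocompact ℂ) (cocompact ℂ) :=
      Metric.cobounded_eq_cocompact (α := ℂ) ▸ tendsto_neg_cobounded
    simpa only [Function.comp_def, Complex.neg_im, abs_neg] using hpos.comp h_neg
  have hmean := (hpos.add hneg).div_const 2
  rw [add_zero, zero_div] at hmean
  constructor
  · refine squeeze_zero (fun _ ↦ by positivity) (fun lam ↦ ?_) hmean
    exact (mul_le_mul_of_nonneg_left (norm_integral_mul_cos_le hfi lam)
      (Real.exp_pos _).le).trans_eq (by ring)
  · refine squeeze_zero (fun _ ↦ by positivity) (fun lam ↦ ?_) hmean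
    exact (mul_le_mul_of_nonneg_left (norm_integral_mul_sin_le hfi lam)
      (Real.exp_pos _).le).trans_eq (by ring)
end

section
/- If z ∈ ℂ satisfies |z − πn| ≥ π/4 for every integer n ∈ ℤ, then |sin z| > (1/4)·e^{|Im z|}. -/
/-!
Write `z = x + y i`, so that `‖sin z‖² = sin² x + sinh² y`. If `|y| ≥ 1/2`, then `e^{2|y|} > 2`
and already `|sinh y| > e^{|y|}/4`. If `|y| < 1/2`, the hypothesis keeps `x` at distance at
least `√(π²/16 - 1/4) > 3/5` from `πℤ`, so `|sin x| ≥ sin (3/5) > 1/2`, while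
`e^{|y|} ≤ 1/(1 - |y|) < 2`.
-/

namespace Complex

theorem sq_norm_sin (z : ℂ) : ‖sin z‖ ^ 2 = Real.sin z.re ^ 2 + Real.sinh z.im ^ 2 := by
  conv_lhs => rw [← z.re_add_im]
  rw [sin_add_mul_I, ← ofReal_sin, ← ofReal_cos, ← ofReal_sinh, ← ofReal_cosh, ← ofReal_mul,
    ← ofReal_mul, Complex.sq_norm, normSq_add_mul_I]
  nlinarith [Real.cosh_sq z.im, Real.sin_sq_add_cos_sq z.re]

theorem abs_sin_re_le_norm_sin (z : ℂ) : |Real.sin z.re| ≤ ‖sin z‖ := by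
  rw [← sq_le_sq₀ (abs_nonneg _) (norm_nonneg _), sq_abs, sq_norm_sin]
  exact le_add_of_nonneg_right (sq_nonneg _)

theorem abs_sinh_im_le_norm_sin (z : ℂ) : |Real.sinh z.im| ≤ ‖sin z‖ := by
  rw [← sq_le_sq₀ (abs_nonneg _) (norm_nonneg _), sq_abs, sq_norm_sin]
  exact le_add_of_nonneg_left (sq_nonneg _)

end Complex

theorem exists_abs_sub_int_mul_le {α : Type*} [Field α] [LinearOrder α] [IsStrictOrderedRing α]
    [FloorRing α] {p : α} (hp : 0 < p) (x : α) : ∃ n : ℤ, |x - n * p| ≤ p / 2 := by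
  refine ⟨round (x / p), ?_⟩
  have hx : x - round (x / p) * p = (x / p - round (x / p)) * p := by field_simp
  rw [hx, abs_mul, abs_of_pos hp]
  nlinarith [abs_sub_round (x / p)]

namespace Real

theorem sin_le_abs_sin_of_forall_le_abs_sub_int_mul_pi {a x : ℝ} (ha₀ : -(π / 2) ≤ a)
    (ha : a ≤ π / 2) (hx : ∀ n : ℤ, a ≤ |x - n * π|) : sin a ≤ |sin x| := by
  obtain ⟨n, hn⟩ := exists_abs_sub_int_mul_le pi_pos x
  calc sin a ≤ sin |x - n * π| := sin_le_sin_of_le_of_le_pi_div_two ha₀ hn (hx n)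
    _ = |sin (x - n * π)| := (abs_sin_eq_sin_abs_of_abs_le_pi (by linarith [pi_pos])).symm
    _ = |sin x| := by rw [sin_sub_int_mul_pi, abs_mul, abs_neg_one_zpow, one_mul]

theorem exp_abs_lt_four_mul_abs_sinh {y : ℝ} (hy : 1 / 2 ≤ |y|) : exp |y| < 4 * |sinh y| := by
  have h2 : 2 < exp (2 * |y|) := by
    linarith [add_one_lt_exp (by positivity : 2 * |y| ≠ 0)]
  have hsplit : exp |y| = exp (-|y|) * exp (2 * |y|) := by rw [← exp_add]; ring_nf
  rw [abs_sinh, sinh_eq]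
  nlinarith [exp_pos (-|y|)]

end Real

open Real

/-- If `z ∈ ℂ` satisfies `|z - πn| ≥ π/4` for every integer `n`,
then `|sin z| > (1/4)·e^{|Im z|}`. -/
theorem stmt_6 (z : ℂ) (h : ∀ n : ℤ, Real.pi / 4 ≤ ‖z - (Real.pi : ℂ) * n‖) :
    (1 / 4 : ℝ) * Real.exp |z.im| < ‖Complex.sin z‖ := by
  rcases le_or_gt (1 / 2) |z.im| with hy | hy
  · linarith [exp_abs_lt_four_mul_abs_sinh hy, z.abs_sinh_im_le_norm_sin]
  · have hdist : ∀ n : ℤ, 3 / 5 ≤ |z.re - n * π| := by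
      intro n
      have hn := pow_le_pow_left₀ (by positivity) (h n) 2
      have hre : (z - π * n).re = z.re - n * π := by simp [mul_comm]
      have him : (z - π * n).im = z.im := by simp
      rw [Complex.sq_norm, Complex.normSq_apply, hre, him] at hn
      rw [← abs_of_pos (by norm_num : (0 : ℝ) < 3 / 5), ← sq_le_sq]
      nlinarith [pi_gt_d2, sq_abs z.im, abs_nonneg z.im]
    have hsin : 1 / 2 < sin (3 / 5) := by linarith [sin_gt_sub_cube (by norm_num : (0 : ℝ) < 3 / 5)]
    have hexp : exp |z.im| ≤ 2 := by
      refine (exp_bound_div_one_sub_of_interval (abs_nonneg _) (by linarith)).trans ?_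
      rw [div_le_iff₀ (by linarith)]; linarith
    calc (1 / 4) * exp |z.im| < sin (3 / 5) := by linarith
      _ ≤ |sin z.re| := sin_le_abs_sin_of_forall_le_abs_sub_int_mul_pi
          (by linarith [pi_pos]) (by linarith [pi_gt_three]) hdist
      _ ≤ ‖Complex.sin z‖ := z.abs_sin_re_le_norm_sin
end

section
/- Let p, q ∈ L¹([0, π]; ℝ) be real-valued, let γ, β, λ, μ ∈ ℝ, and let φ, ψ : [0, π] → ℝ² be absolutely continuous with B φ′ + Ω φ = λ φ and B ψ′ + Ω ψ = μ ψ almost everywhere, φ(0) = (sin γ, −cos γ), ψ(0) = (sin β, −cos β), and φ₁(π) = 0 = ψ₁(π). Then (λ − μ) · ∫₀^π (φ₁(x) ψ₁(x) + φ₂(x) ψ₂(x)) dx = sin(β − γ). -/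
open MeasureTheory Filter Set

noncomputable section

/-- The matrix `B` with rows `(0, 1)` and `(-1, 0)`. -/
def BmatR : Matrix (Fin 2) (Fin 2) ℝ := !![0, 1; -1, 0]

/-- The potential matrix `Ω(x)` with rows `(p x, q x)` and `(q x, -p x)`. -/
def OmegaR (p q : ℝ → ℝ) (x : ℝ) : Matrix (Fin 2) (Fin 2) ℝ := !![p x, q x; q x, -p x]

lemma ibp_aux (T : ℝ) (f g : ℝ → ℝ)
    (hf : IntegrableOn f (Ioc 0 T)) (hg : IntegrableOn g (Ioc 0 T)) :
    (∫ x in Ioc (0:ℝ) T, f x * ∫ s in Ioc (0:ℝ) x, g s)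
      + ∫ x in Ioc (0:ℝ) T, g x * ∫ s in Ioc (0:ℝ) x, f s
      = (∫ x in Ioc (0:ℝ) T, f x) * ∫ x in Ioc (0:ℝ) T, g x := by
  set μ := volume.restrict (Ioc (0:ℝ) T) with hμ
  set S : Set (ℝ × ℝ) := {z : ℝ × ℝ | z.2 ≤ z.1} with hSdef
  have hS : MeasurableSet S := (isClosed_le continuous_snd continuous_fst).measurableSet
  set K : ℝ × ℝ → ℝ := fun z => f z.1 * g z.2 with hKdef
  have hK : Integrable K (μ.prod μ) := hf.mul_prod hg
  have h1 : Integrable (S.indicator K) (μ.prod μ) := hK.indicator hS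
  have h2 : Integrable (Sᶜ.indicator K) (μ.prod μ) := hK.indicator hS.compl
  have hsplit : ∫ z, K z ∂(μ.prod μ)
      = (∫ z, S.indicator K z ∂(μ.prod μ)) + ∫ z, Sᶜ.indicator K z ∂(μ.prod μ) := by
    rw [← integral_add h1 h2]
    congr 1
    ext z
    by_cases hz : z ∈ S <;> simp [Set.indicator_apply, hz]
  have htot : ∫ z, K z ∂(μ.prod μ) = (∫ x in Ioc (0:ℝ) T, f x) * ∫ x in Ioc (0:ℝ) T, g x :=
    integral_prod_mul f g
  have hA : ∫ z, S.indicator K z ∂(μ.prod μ)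
      = ∫ x in Ioc (0:ℝ) T, f x * ∫ s in Ioc (0:ℝ) x, g s := by
    rw [MeasureTheory.integral_prod _ h1]
    refine setIntegral_congr_fun measurableSet_Ioc (fun x hx => ?_)
    have heq : ∀ s, S.indicator K (x, s) = (Iic x).indicator (fun s => f x * g s) s := by
      intro s
      by_cases hs : s ≤ x <;>
        simp [Set.indicator_apply, hSdef, hKdef, hs]
    simp only [heq]
    rw [integral_indicator measurableSet_Iic, hμ,
      Measure.restrict_restrict measurableSet_Iic]
    have : Iic x ∩ Ioc (0:ℝ) T = Ioc (0:ℝ) x := by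
      ext s
      simp only [mem_inter_iff, mem_Iic, mem_Ioc]
      constructor
      · rintro ⟨h1, h2, h3⟩; exact ⟨h2, h1⟩
      · rintro ⟨h1, h2⟩; exact ⟨h2, h1, h2.trans hx.2⟩
    rw [this, integral_const_mul]
  have hB : ∫ z, Sᶜ.indicator K z ∂(μ.prod μ)
      = ∫ x in Ioc (0:ℝ) T, g x * ∫ s in Ioc (0:ℝ) x, f s := by
    rw [MeasureTheory.integral_prod _ h2, integral_integral_swap (by exact h2)]
    refine setIntegral_congr_fun measurableSet_Ioc (fun s hs => ?_)
    have heq : ∀ x, Sᶜ.indicator K (x, s) = (Iio s).indicator (fun x => f x * g s) x := by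
      intro x
      by_cases hx : x < s <;>
        simp [Set.indicator_apply, hSdef, hKdef, hx, not_lt.mp, le_of_lt,
          show (¬ s ≤ x ↔ x < s) from not_le]
    simp only [heq]
    rw [integral_indicator measurableSet_Iio, hμ,
      Measure.restrict_restrict measurableSet_Iio]
    have : Iio s ∩ Ioc (0:ℝ) T = Ioo (0:ℝ) s := by
      ext x
      simp only [mem_inter_iff, mem_Iio, mem_Ioc, mem_Ioo]
      constructor
      · rintro ⟨h1, h2, h3⟩; exact ⟨h2, h1⟩
      · rintro ⟨h1, h2⟩; exact ⟨h2, h1, (h2.le).trans hs.2⟩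
    rw [this, ← integral_Ioc_eq_integral_Ioo, integral_mul_const, mul_comm]
  rw [hA, hB] at hsplit
  rw [← htot, hsplit]

lemma prod_rule (T : ℝ) (hT : 0 ≤ T) (u v u' v' : ℝ → ℝ)
    (hu' : IntegrableOn u' (Icc 0 T)) (hv' : IntegrableOn v' (Icc 0 T))
    (hu : ∀ x ∈ Icc (0:ℝ) T, u x = u 0 + ∫ s in Ioc (0:ℝ) x, u' s)
    (hv : ∀ x ∈ Icc (0:ℝ) T, v x = v 0 + ∫ s in Ioc (0:ℝ) x, v' s) :
    IntegrableOn (fun x => u' x * v x + u x * v' x) (Ioc 0 T) ∧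
      ∫ x in Ioc (0:ℝ) T, (u' x * v x + u x * v' x) = u T * v T - u 0 * v 0 := by
  have hsub : Ioc (0:ℝ) T ⊆ Icc (0:ℝ) T := Ioc_subset_Icc_self
  set U : ℝ → ℝ := fun x => u 0 + ∫ s in Ioc (0:ℝ) x, u' s with hU
  set V : ℝ → ℝ := fun x => v 0 + ∫ s in Ioc (0:ℝ) x, v' s with hV
  have hUc : ContinuousOn U (Icc 0 T) :=
    continuousOn_const.add (intervalIntegral.continuousOn_primitive hu')
  have hVc : ContinuousOn V (Icc 0 T) :=
    continuousOn_const.add (intervalIntegral.continuousOn_primitive hv')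
  -- integrability on Icc of u' * V and U * v'
  have hi1 : IntegrableOn (fun x => u' x * V x) (Icc 0 T) := by
    obtain ⟨C, hC⟩ := (isCompact_Icc.image_of_continuousOn hVc).isBounded.exists_norm_le
    have hb : ∀ᵐ x ∂(volume.restrict (Icc (0:ℝ) T)), ‖V x‖ ≤ C := by
      filter_upwards [ae_restrict_mem measurableSet_Icc] with x hx
      exact hC _ (mem_image_of_mem _ hx)
    have h : Integrable (fun x => V x * u' x) (volume.restrict (Icc (0:ℝ) T)) :=
      Integrable.bdd_mul hu' (hVc.aestronglyMeasurable measurableSet_Icc) hb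
    exact h.congr (Eventually.of_forall fun x => mul_comm _ _)
  have hi2 : IntegrableOn (fun x => U x * v' x) (Icc 0 T) := by
    obtain ⟨C, hC⟩ := (isCompact_Icc.image_of_continuousOn hUc).isBounded.exists_norm_le
    have hb : ∀ᵐ x ∂(volume.restrict (Icc (0:ℝ) T)), ‖U x‖ ≤ C := by
      filter_upwards [ae_restrict_mem measurableSet_Icc] with x hx
      exact hC _ (mem_image_of_mem _ hx)
    exact Integrable.bdd_mul hv' (hUc.aestronglyMeasurable measurableSet_Icc) hb
  have heqInt : ∀ᵐ x ∂(volume.restrict (Ioc (0:ℝ) T)),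
      u' x * v x + u x * v' x = u' x * V x + U x * v' x := by
    filter_upwards [ae_restrict_mem measurableSet_Ioc] with x hx
    rw [hu x (hsub hx), hv x (hsub hx)]
  have hint : IntegrableOn (fun x => u' x * v x + u x * v' x) (Ioc 0 T) :=
    ((hi1.mono_set hsub).add (hi2.mono_set hsub)).congr (heqInt.mono fun x h => h.symm)
  refine ⟨hint, ?_⟩
  rw [integral_congr_ae heqInt]
  have hIu : ∫ s in Ioc (0:ℝ) T, u' s = u T - u 0 := by
    rw [hu T ⟨hT, le_rfl⟩]; ring
  have hIv : ∫ s in Ioc (0:ℝ) T, v' s = v T - v 0 := by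
    rw [hv T ⟨hT, le_rfl⟩]; ring
  have key := ibp_aux T u' v' (hu'.mono_set hsub) (hv'.mono_set hsub)
  rw [hIu, hIv] at key
  have expand1 : ∫ x in Ioc (0:ℝ) T, (u' x * V x + U x * v' x)
      = (∫ x in Ioc (0:ℝ) T, u' x * V x) + ∫ x in Ioc (0:ℝ) T, U x * v' x :=
    integral_add (hi1.mono_set hsub) (hi2.mono_set hsub)
  have j1 : IntegrableOn (fun x => u' x * ∫ s in Ioc (0:ℝ) x, v' s) (Ioc 0 T) := by
    have h := (hi1.mono_set hsub).sub ((hu'.mono_set hsub).mul_const (v 0))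
    exact h.congr (Eventually.of_forall fun x => by simp only [hV, Pi.sub_apply]; ring)
  have j2 : IntegrableOn (fun x => v' x * ∫ s in Ioc (0:ℝ) x, u' s) (Ioc 0 T) := by
    have h := ((hi2.mono_set hsub).sub ((hv'.mono_set hsub).const_mul (u 0)))
    exact h.congr (Eventually.of_forall fun x => by simp only [hU, Pi.sub_apply]; ring)
  have e1 : ∫ x in Ioc (0:ℝ) T, u' x * V x
      = v 0 * (u T - u 0) + ∫ x in Ioc (0:ℝ) T, u' x * ∫ s in Ioc (0:ℝ) x, v' s := by
    have hfun : ∀ x, u' x * V x = v 0 * u' x + u' x * ∫ s in Ioc (0:ℝ) x, v' s := by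
      intro x; simp only [hV]; ring
    simp only [hfun]
    rw [integral_add ((hu'.mono_set hsub).const_mul _) j1, integral_const_mul, hIu]
  have e2 : ∫ x in Ioc (0:ℝ) T, U x * v' x
      = u 0 * (v T - v 0) + ∫ x in Ioc (0:ℝ) T, v' x * ∫ s in Ioc (0:ℝ) x, u' s := by
    have hfun : ∀ x, U x * v' x = u 0 * v' x + v' x * ∫ s in Ioc (0:ℝ) x, u' s := by
      intro x; simp only [hU]; ring
    simp only [hfun]
    rw [integral_add ((hv'.mono_set hsub).const_mul _) j2, integral_const_mul, hIv]
  rw [expand1, e1, e2]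
  linear_combination key

/-- If `φ, ψ` are absolutely continuous solutions of
`B y' + Ω y = λ y` resp. `B y' + Ω y = μ y` on `[0,π]`, with initial data
`φ(0) = (sin γ, -cos γ)`, `ψ(0) = (sin β, -cos β)` and `φ₁(π) = ψ₁(π) = 0`, then
`(λ - μ) ∫₀^π (φ₁ψ₁ + φ₂ψ₂) dx = sin(β - γ)`. -/
theorem stmt_9 (p q : ℝ → ℝ)
    (hp : IntegrableOn p (Icc 0 Real.pi)) (hq : IntegrableOn q (Icc 0 Real.pi))
    (γ β lam mu : ℝ)
    (φ ψ φ' ψ' : ℝ → Fin 2 → ℝ)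
    (hφ'int : IntegrableOn φ' (Icc 0 Real.pi))
    (hψ'int : IntegrableOn ψ' (Icc 0 Real.pi))
    (hφAC : ∀ x ∈ Icc (0:ℝ) Real.pi, φ x = φ 0 + ∫ s in (0:ℝ)..x, φ' s)
    (hψAC : ∀ x ∈ Icc (0:ℝ) Real.pi, ψ x = ψ 0 + ∫ s in (0:ℝ)..x, ψ' s)
    (hφeq : ∀ᵐ x ∂(volume.restrict (Ioc 0 Real.pi)),
      BmatR.mulVec (φ' x) + (OmegaR p q x).mulVec (φ x) = lam • φ x)
    (hψeq : ∀ᵐ x ∂(volume.restrict (Ioc 0 Real.pi)),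
      BmatR.mulVec (ψ' x) + (OmegaR p q x).mulVec (ψ x) = mu • ψ x)
    (hφ0 : φ 0 = ![Real.sin γ, -Real.cos γ])
    (hψ0 : ψ 0 = ![Real.sin β, -Real.cos β])
    (hφpi : φ Real.pi 0 = 0) (hψpi : ψ Real.pi 0 = 0) :
    (lam - mu) * ∫ x in (0:ℝ)..Real.pi, (φ x 0 * ψ x 0 + φ x 1 * ψ x 1) =
      Real.sin (β - γ) := by
  have hT : (0:ℝ) ≤ Real.pi := Real.pi_nonneg
  -- componentwise integrability and representation
  have hcomp : ∀ (f : ℝ → Fin 2 → ℝ), IntegrableOn f (Icc 0 Real.pi) →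
      ∀ i, IntegrableOn (fun s => f s i) (Icc 0 Real.pi) := by
    intro f hf i
    exact (ContinuousLinearMap.proj (R := ℝ) (φ := fun _ : Fin 2 => ℝ) i).integrable_comp hf
  have hrep : ∀ (f f' : ℝ → Fin 2 → ℝ), IntegrableOn f' (Icc 0 Real.pi) →
      (∀ x ∈ Icc (0:ℝ) Real.pi, f x = f 0 + ∫ s in (0:ℝ)..x, f' s) →
      ∀ i, ∀ x ∈ Icc (0:ℝ) Real.pi, f x i = f 0 i + ∫ s in Ioc (0:ℝ) x, f' s i := by
    intro f f' hf' hAC i x hx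
    have h := hAC x hx
    rw [intervalIntegral.integral_of_le hx.1] at h
    have hsub : Ioc (0:ℝ) x ⊆ Icc (0:ℝ) Real.pi :=
      Ioc_subset_Icc_self.trans (Icc_subset_Icc le_rfl hx.2)
    have happ : (∫ s in Ioc (0:ℝ) x, f' s) i = ∫ s in Ioc (0:ℝ) x, f' s i :=
      (ContinuousLinearMap.integral_comp_comm
        (ContinuousLinearMap.proj (R := ℝ) (φ := fun _ : Fin 2 => ℝ) i)
        (hf'.mono_set hsub)).symm
    calc f x i = (f 0 + ∫ s in Ioc (0:ℝ) x, f' s) i := by rw [← h]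
      _ = f 0 i + ∫ s in Ioc (0:ℝ) x, f' s i := by rw [Pi.add_apply, happ]
  -- the two product rules
  obtain ⟨hint1, h1⟩ := prod_rule Real.pi hT (fun x => φ x 0) (fun x => ψ x 1)
    (fun x => φ' x 0) (fun x => ψ' x 1) (hcomp φ' hφ'int 0) (hcomp ψ' hψ'int 1)
    (hrep φ φ' hφ'int hφAC 0) (hrep ψ ψ' hψ'int hψAC 1)
  obtain ⟨hint2, h2⟩ := prod_rule Real.pi hT (fun x => φ x 1) (fun x => ψ x 0)
    (fun x => φ' x 1) (fun x => ψ' x 0) (hcomp φ' hφ'int 1) (hcomp ψ' hψ'int 0)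
    (hrep φ φ' hφ'int hφAC 1) (hrep ψ ψ' hψ'int hψAC 0)
  have hD : ∫ x in Ioc (0:ℝ) Real.pi,
      ((φ' x 0 * ψ x 1 + φ x 0 * ψ' x 1) - (φ' x 1 * ψ x 0 + φ x 1 * ψ' x 0))
      = (φ Real.pi 0 * ψ Real.pi 1 - φ 0 0 * ψ 0 1)
        - (φ Real.pi 1 * ψ Real.pi 0 - φ 0 1 * ψ 0 0) := by
    rw [integral_sub hint1 hint2, h1, h2]
  -- use the differential equations to rewrite the integrand a.e.
  have hae : ∀ᵐ x ∂(volume.restrict (Ioc 0 Real.pi)),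
      ((φ' x 0 * ψ x 1 + φ x 0 * ψ' x 1) - (φ' x 1 * ψ x 0 + φ x 1 * ψ' x 0))
      = (mu - lam) * (φ x 0 * ψ x 0 + φ x 1 * ψ x 1) := by
    filter_upwards [hφeq, hψeq] with x hφx hψx
    have hφ0' := congrFun hφx 0
    have hφ1' := congrFun hφx 1
    have hψ0' := congrFun hψx 0
    have hψ1' := congrFun hψx 1
    simp [BmatR, OmegaR, Matrix.mulVec, dotProduct, Fin.sum_univ_two]
      at hφ0' hφ1' hψ0' hψ1'
    linear_combination (-(ψ x 0)) * hφ0' + (-(ψ x 1)) * hφ1'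
      + (φ x 0) * hψ0' + (φ x 1) * hψ1' 
  rw [integral_congr_ae hae] at hD
  rw [integral_const_mul] at hD
  -- evaluate the boundary terms
  have hb0 : φ 0 0 = Real.sin γ := by rw [hφ0]; rfl
  have hb1 : φ 0 1 = -Real.cos γ := by rw [hφ0]; rfl
  have hb2 : ψ 0 0 = Real.sin β := by rw [hψ0]; rfl
  have hb3 : ψ 0 1 = -Real.cos β := by rw [hψ0]; rfl
  rw [intervalIntegral.integral_of_le hT, Real.sin_sub]
  rw [hφpi, hψpi, hb0, hb1, hb2, hb3] at hD
  linear_combination -hD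
end
end

section
/- Let a, e ∈ ℝ and let h, g : ℤ → ℝ satisfy Σ_{k ∈ ℤ} h_k² < ∞ and Σ_{k ∈ ℤ} g_k² < ∞. Define λ_k = k + a + h_k and μ_k = k + e + g_k and assume λ_k ≠ 0 and μ_k ≠ 0 for all k ≠ 0. Then the infinite product ∏_{k=1}^{∞} (μ_k · μ_{−k}) / (λ_k · λ_{−k}) converges: the partial products ∏_{k=1}^{N} (μ_k μ_{−k})/(λ_k λ_{−k}) tend, as N → ∞, to a finite nonzero limit. -/
/-!
Expanding, `(k + e + g_k)(-k + e + g_{-k}) = -k² (1 - (g_{-k} - g_k)/k - (e + g_k)(e + g_{-k})/k²)`,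
and `2|g_k|/k ≤ g_k² + 1/k²`; so `μ_k μ_{-k}` and `λ_k λ_{-k}` are `-k² (1 + ε_k)` with
`∑ |ε_k| < ∞`. The factors of the product are then `1 + ε'_k` with `∑ |ε'_k| < ∞`, and such a
product of nonzero factors converges to a nonzero limit.
-/

open Filter Topology Finset

lemma tendsto_of_summable_sq_sub {s : ℕ → ℝ} {c : ℝ} (hs : Summable fun k => (s k - c) ^ 2) :
    Tendsto s atTop (𝓝 c) := by
  have h := (hs.tendsto_atTop_zero.sqrt).congr fun k => Real.sqrt_sq_eq_abs (s k - c)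
  rw [Real.sqrt_zero] at h
  exact tendsto_iff_dist_tendsto_zero.2 h

lemma summable_div_natCast_of_summable_sq {x : ℕ → ℝ} (hx : Summable fun k => x k ^ 2) :
    Summable fun k : ℕ => x k / k := by
  refine .of_norm_bounded (g := fun k : ℕ => x k ^ 2 + 1 / (k : ℝ) ^ 2)
    (hx.add (Real.summable_one_div_nat_pow.2 one_lt_two)) fun k => ?_
  rw [Real.norm_eq_abs, abs_div, Nat.abs_cast, div_eq_mul_one_div]
  nlinarith [two_mul_le_add_sq |x k| (1 / (k : ℝ)), sq_abs (x k), abs_nonneg (x k),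
    (by positivity : (0 : ℝ) ≤ 1 / (k : ℝ)), div_pow (1 : ℝ) k 2]

lemma summable_mul_div_sq_sub_one {s t : ℕ → ℝ} {c : ℝ} (hs : Summable fun k => (s k - c) ^ 2)
    (ht : Summable fun k => (t k - c) ^ 2) :
    Summable fun k : ℕ => (k + s k) * (k - t k) / (k : ℝ) ^ 2 - 1 := by
  have hst : Summable fun k : ℕ => s k * t k / (k : ℝ) ^ 2 := by
    refine summable_of_isBigO_nat (Real.summable_one_div_nat_pow.2 one_lt_two) ?_
    have := (((tendsto_of_summable_sq_sub hs).mul (tendsto_of_summable_sq_sub ht)).isBigO_one ℝ).mul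
      (Asymptotics.isBigO_refl (fun k : ℕ => 1 / (k : ℝ) ^ 2) atTop)
    exact (this.congr_left fun k => mul_one_div _ _).congr_right fun k => one_mul _
  refine (((summable_div_natCast_of_summable_sq hs).sub
    (summable_div_natCast_of_summable_sq ht)).sub hst).congr_atTop ?_
  filter_upwards [eventually_ne_atTop 0] with k hk
  field_simp
  ring

lemma summable_norm_div_sub_one {ι 𝕜 : Type*} [NormedField 𝕜] {u v : ι → 𝕜}
    (hu : Summable fun i => ‖u i - 1‖) (hv : Summable fun i => ‖v i - 1‖) :
    Summable fun i => ‖u i / v i - 1‖ := by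
  refine .of_norm_bounded_eventually ((hu.add hv).mul_left 2) ?_
  filter_upwards [hv.tendsto_cofinite_zero.eventually (gt_mem_nhds one_half_pos)] with i hi
  have hv_half : 1 / 2 ≤ ‖v i‖ := by
    have := norm_sub_norm_le (1 : 𝕜) (v i)
    rw [norm_one, norm_sub_rev] at this
    linarith
  have hv0 : v i ≠ 0 := norm_pos_iff.1 (by linarith)
  rw [norm_norm, div_sub_one hv0, norm_div, div_le_iff₀ (by linarith)]
  calc ‖u i - v i‖ = ‖(u i - 1) - (v i - 1)‖ := by rw [sub_sub_sub_cancel_right]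
    _ ≤ ‖u i - 1‖ + ‖v i - 1‖ := norm_sub_le _ _
    _ ≤ 2 * (‖u i - 1‖ + ‖v i - 1‖) * ‖v i‖ := by
      nlinarith [norm_nonneg (u i - 1), norm_nonneg (v i - 1)]

lemma exists_tendsto_prod_Icc_ne_zero {R : Type*} [NormedCommRing R] [NormOneClass R]
    [CompleteSpace R] [NormMulClass R] {f : ℕ → R} (hf : Summable fun k => ‖f k - 1‖)
    (hf0 : ∀ k, 1 ≤ k → f k ≠ 0) :
    ∃ L, L ≠ 0 ∧ Tendsto (fun N => ∏ k ∈ Icc 1 N, f k) atTop (𝓝 L) := by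
  have hshift : Summable fun k => ‖f (k + 1) - 1‖ := (summable_nat_add_iff 1).2 hf
  refine ⟨∏' k, (1 + (f (k + 1) - 1)),
    tprod_one_add_ne_zero_of_summable (fun k => by simpa using hf0 (k + 1) k.succ_pos) hshift, ?_⟩
  convert (multipliable_one_add_of_summable hshift).tendsto_prod_tprod_nat using 2 with N
  rw [← Ico_add_one_right_eq_Icc, prod_Ico_eq_prod_range]
  simp [add_comm]

/-- If `λ_k = k + a + h_k` and `μ_k = k + e + g_k` with
square-summable `h, g` and `λ_k, μ_k ≠ 0` for `k ≠ 0`, then the symmetric infinite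
product `∏_{k=1}^∞ (μ_k μ_{-k})/(λ_k λ_{-k})` converges to a finite nonzero limit. -/
theorem stmt_10 (a e : ℝ) (h g : ℤ → ℝ)
    (hh : Summable fun k : ℤ => (h k) ^ 2) (hg : Summable fun k : ℤ => (g k) ^ 2)
    (hlam : ∀ k : ℤ, k ≠ 0 → (k : ℝ) + a + h k ≠ 0)
    (hmu : ∀ k : ℤ, k ≠ 0 → (k : ℝ) + e + g k ≠ 0) :
    ∃ L : ℝ, L ≠ 0 ∧
      Tendsto (fun N : ℕ => ∏ k ∈ Finset.Icc 1 N,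
          ((((k : ℤ) : ℝ) + e + g (k : ℤ)) * ((-(k : ℤ) : ℝ) + e + g (-(k : ℤ)))) /
            ((((k : ℤ) : ℝ) + a + h (k : ℤ)) * ((-(k : ℤ) : ℝ) + a + h (-(k : ℤ)))))
        atTop (nhds L) := by
  have hpair : ∀ (c : ℝ) (r : ℤ → ℝ), Summable (fun k : ℤ => r k ^ 2) →
      Summable fun k : ℕ => ‖(k + (c + r k)) * (k - (c + r (-k))) / (k : ℝ) ^ 2 - 1‖ := by
    intro c r hr
    refine (summable_mul_div_sq_sub_one (c := c) ?_ ?_).norm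
    · simpa only [add_sub_cancel_left, Function.comp_def] using hr.comp_injective Nat.cast_injective
    · simpa only [add_sub_cancel_left, Function.comp_def] using hr.comp_injective (neg_injective.comp Nat.cast_injective)
  refine exists_tendsto_prod_Icc_ne_zero
    ((summable_norm_div_sub_one (hpair e g hg) (hpair a h hh)).congr_atTop ?_) fun k hk => ?_
  · filter_upwards [eventually_ne_atTop 0] with k hk
    rw [div_div_div_cancel_right₀ (pow_ne_zero 2 (Nat.cast_ne_zero.2 hk)), ← neg_div_neg_eq]
    congr 1
    push_cast
    ring
  · have hk0 : (k : ℤ) ≠ 0 := by positivity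
    have hmu' := hmu (-k) (neg_ne_zero.2 hk0)
    have hlam' := hlam (-k) (neg_ne_zero.2 hk0)
    push_cast at hmu' hlam'
    exact div_ne_zero (mul_ne_zero (hmu k hk0) hmu') (mul_ne_zero (hlam k hk0) hlam')
end
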